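/- arXiv:1305.5403 — 9 statements merged into one kernel-verified Lean document; each statement's English description precedes it below -/
import Mathlib

section
/- If G is residually finite and N is a finite normal subgroup of G, then the quotient G/N is residually finite. -/
/-- A group is residually finite if every nontrivial element has nontrivial image
in some finite quotient. -/
def ResiduallyFinite (G : Type*) [Group G] : Prop :=
  ∀ g : G, g ≠ 1 → ∃ (K : Type) (_ : Group K) (_ : Finite K) (φ : G →* K), φ g ≠ 1

/-- If `G` is residually finite and `N ⊴ G` is a finite normal subgroup, then `G/N`
is residually finite. -/
theorem stmt2 (G : Type*) [Group G] (hrf : ResiduallyFinite G)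
    (N : Subgroup G) [N.Normal] [Finite N] :
    ResiduallyFinite (G ⧸ N) := by
  intro x hx
  obtain ⟨g, rfl⟩ := QuotientGroup.mk_surjective x
  have hg : g ∉ N := by
    intro hmem
    exact hx ((QuotientGroup.eq_one_iff g).mpr hmem)
  have hsep : ∀ n : N, g * (n : G)⁻¹ ≠ 1 := by
    intro n h
    have : g = (n : G) := mul_inv_eq_one.mp h
    exact hg (this ▸ n.2)
  choose K instK instF φ hφ using fun n : N => hrf _ (hsep n)
  haveI : Fintype N := Fintype.ofFinite N
  obtain ⟨m, ⟨e⟩⟩ : ∃ m, Nonempty (Fin m ≃ N) :=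
    ⟨Fintype.card N, ⟨(Fintype.equivFin N).symm⟩⟩
  letI : ∀ i : Fin m, Group (K (e i)) := fun i => instK (e i)
  haveI : ∀ i : Fin m, Finite (K (e i)) := fun i => instF (e i)
  let Φ : G →* ∀ i : Fin m, K (e i) := Pi.monoidHom fun i => φ (e i)
  let ψ := Φ.rangeRestrict
  let M := N.map ψ
  haveI : M.Normal := Subgroup.Normal.map inferInstance ψ Φ.rangeRestrict_surjective
  have hψg : ψ g ∉ M := by
    rintro ⟨n, hn, hne⟩
    have hΦ : Φ n = Φ g := congrArg Subtype.val hne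
    set i := e.symm (⟨n, hn⟩ : N) with hi
    have h2 : φ (e i) n = φ (e i) g := congrFun hΦ i
    have hcoe : ((e i : N) : G) = n := by rw [hi, e.apply_symm_apply]
    apply hφ (e i)
    rw [map_mul, map_inv, hcoe]
    simp [← h2]
  have hker : ∀ n ∈ N, ((QuotientGroup.mk' M).comp ψ) n = 1 := by
    intro n hn
    simp only [MonoidHom.comp_apply, QuotientGroup.mk'_apply]
    rw [QuotientGroup.eq_one_iff]
    exact Subgroup.mem_map.mpr ⟨n, hn, rfl⟩
  refine ⟨Φ.range ⧸ M, inferInstance, inferInstance,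
    QuotientGroup.lift N ((QuotientGroup.mk' M).comp ψ) hker, ?_⟩
  have : QuotientGroup.lift N ((QuotientGroup.mk' M).comp ψ) hker (QuotientGroup.mk g)
      = QuotientGroup.mk' M (ψ g) := rfl
  rw [this]
  intro h1
  exact hψg ((QuotientGroup.eq_one_iff _).mp (by simpa using h1))
end

section
/- Let H be a group with subgroups C_1,...,C_s, and let PMCG^∂(H) be the quotient of Aut^∂(H) by the normal subgroup I = {(τ_h; h,...,h) : h ∈ H}. Then the map sending the class of (α; a_1, a_2,...,a_s) with a_1 = 1 to the pair ((a_2^{-1},...,a_s^{-1}), α) defines an injective group homomorphism from PMCG^∂(H) into the semidirect product H^{s-1} ⋊ Aut(H), where Aut(H) acts diagonally on H^{s-1}. -/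
variable (H : Type*) [Group H]

def autPi (s : ℕ) : MulAut H →* MulAut (Fin s → H) where
  toFun α := MulEquiv.piCongrRight fun _ => α
  map_one' := rfl
  map_mul' _ _ := rfl

abbrev SDProd (s : ℕ) := SemidirectProduct (Fin s → H) (MulAut H) (autPi H s)

variable {H}

def AutBd {s : ℕ} (C : Fin s → Subgroup H) : Subgroup (SDProd H s) where
  carrier := {x | ∀ i, ∀ c ∈ C i, x.right c = (x.left i)⁻¹ * c * x.left i}
  one_mem' := by intro i c hc; simp
  mul_mem' := by
    intro x y hx hy i c hc
    simp only [SemidirectProduct.mul_right, SemidirectProduct.mul_left, Pi.mul_apply]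
    have h1 : (x.right * y.right) c = x.right (y.right c) := rfl
    have h2 : (autPi H _ x.right y.left) i = x.right (y.left i) := rfl
    rw [h1, h2, hy i c hc, map_mul, map_mul, map_inv, hx i c hc]
    group
  inv_mem' := by
    intro x hx i c hc
    have h3 : (x.right⁻¹ (x.left i))⁻¹ * x.right⁻¹ c * x.right⁻¹ (x.left i) = c := by
      have h4 : (x.right⁻¹ : MulAut H) ((x.left i)⁻¹ * c * x.left i) = c := by
        rw [← hx i c hc]; simp
      simpa only [map_mul, map_inv] using h4
    have h2 : (autPi H _ x.right⁻¹ x.left⁻¹) i = x.right⁻¹ ((x.left i)⁻¹) := rfl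
    simp only [SemidirectProduct.inv_right, SemidirectProduct.inv_left, Pi.inv_apply]
    rw [h2, map_inv, inv_inv]
    calc (x.right⁻¹ : MulAut H) c
        = x.right⁻¹ (x.left i) *
            ((x.right⁻¹ (x.left i))⁻¹ * x.right⁻¹ c * x.right⁻¹ (x.left i)) *
            (x.right⁻¹ (x.left i))⁻¹ := by group
      _ = x.right⁻¹ (x.left i) * c * (x.right⁻¹ (x.left i))⁻¹ := by rw [h3]

/-!
The elements `δ h = (τ_h; h, …, h)` form the image of a homomorphism `δ : H → H^s ⋊ Aut(H)`, and
`x * δ h = δ (α h) * x` for `x = (α; a)`. This identity makes `x ↦ δ a₀ * x` a homomorphism; it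
kills exactly `I` and lands among the elements with `a₀ = 1`, on which forgetting `a₀` is injective.
-/

namespace SDProd

@[simp]
lemma autPi_apply {n : ℕ} (α : MulAut H) (l : Fin n → H) (i : Fin n) :
    autPi H n α l i = α (l i) :=
  rfl

/-- The element `(τ_h; h, …, h)`; coordinates of `SDProd` store the inverses `aᵢ⁻¹`. -/
def diagConj (n : ℕ) : H →* SDProd H n where
  toFun h := ⟨fun _ => h⁻¹, MulAut.conj h⟩
  map_one' := by ext <;> simp
  map_mul' h k := by
    refine SemidirectProduct.ext (funext fun _ => ?_) (map_mul _ h k)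
    change (h * k)⁻¹ = h⁻¹ * (h * k⁻¹ * h⁻¹)
    group

@[simp]
lemma diagConj_left {n : ℕ} (h : H) (i : Fin n) : (diagConj n h).left i = h⁻¹ :=
  rfl

@[simp]
lemma diagConj_right {n : ℕ} (h : H) : (diagConj n h).right = MulAut.conj h :=
  rfl

lemma mul_diagConj {n : ℕ} (x : SDProd H n) (h : H) :
    x * diagConj n h = diagConj n (x.right h) * x := by
  ext i
  · simp only [SemidirectProduct.mul_left, Pi.mul_apply, autPi_apply, diagConj_left, map_inv,
      diagConj_right, MulAut.conj_apply]
    group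
  · simp [mul_assoc]

def normalize (n : ℕ) : SDProd H (n + 1) →* SDProd H (n + 1) where
  toFun x := diagConj (n + 1) (x.left 0) * x
  map_one' := by simp
  map_mul' x y := by
    simp only [SemidirectProduct.mul_left, Pi.mul_apply, autPi_apply, map_mul]
    rw [mul_assoc _ x, ← mul_assoc x, mul_diagConj x]
    simp only [mul_assoc]

lemma normalize_apply {n : ℕ} (x : SDProd H (n + 1)) :
    normalize n x = diagConj (n + 1) (x.left 0) * x :=
  rfl

@[simp]
lemma normalize_left_zero {n : ℕ} (x : SDProd H (n + 1)) : (normalize n x).left 0 = 1 := by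
  simp [normalize_apply]

lemma normalize_of_left_zero {n : ℕ} {x : SDProd H (n + 1)} (hx : x.left 0 = 1) :
    normalize n x = x := by
  simp [normalize_apply, hx]

lemma normalize_eq_one_iff {n : ℕ} {x : SDProd H (n + 1)} :
    normalize n x = 1 ↔ x = diagConj (n + 1) (x.left 0)⁻¹ := by
  rw [normalize_apply, mul_eq_one_iff_eq_inv', map_inv]

def dropFirst (n : ℕ) : SDProd H (n + 1) →* SDProd H n :=
  SemidirectProduct.map
    { toFun := Fin.tail, map_one' := rfl, map_mul' := fun _ _ => rfl } (MonoidHom.id _)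
    fun _ => rfl

lemma dropFirst_apply {n : ℕ} (x : SDProd H (n + 1)) :
    dropFirst n x = ⟨Fin.tail x.left, x.right⟩ :=
  rfl

lemma dropFirst_eq_one_iff_of_left_zero {n : ℕ} {x : SDProd H (n + 1)} (hx : x.left 0 = 1) :
    dropFirst n x = 1 ↔ x = 1 := by
  refine ⟨fun h => ?_, fun h => by rw [h, map_one]⟩
  rw [dropFirst_apply, SemidirectProduct.ext_iff] at h
  refine SemidirectProduct.ext (funext fun i => ?_) h.2
  exact Fin.cases hx (fun j => congrFun h.1 j) i

def normalizedTail (n : ℕ) : SDProd H (n + 1) →* SDProd H n :=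
  (dropFirst n).comp (normalize n)

lemma normalizedTail_eq_one_iff {n : ℕ} {x : SDProd H (n + 1)} :
    normalizedTail n x = 1 ↔ ∃ h : H, x = diagConj (n + 1) h := by
  rw [normalizedTail, MonoidHom.comp_apply,
    dropFirst_eq_one_iff_of_left_zero (normalize_left_zero x), normalize_eq_one_iff]
  refine ⟨fun hx => ⟨_, hx⟩, ?_⟩
  rintro ⟨h, rfl⟩
  simp

lemma normalizedTail_of_left_zero {n : ℕ} {x : SDProd H (n + 1)} (hx : x.left 0 = 1) :
    normalizedTail n x = ⟨Fin.tail x.left, x.right⟩ := by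
  rw [normalizedTail, MonoidHom.comp_apply, normalize_of_left_zero hx, dropFirst_apply]

end SDProd

/-- `PMCG^∂(H)`, the quotient of `Aut^∂(H)` by the normal subgroup
`I = {(τ_h; h,…,h) : h ∈ H}`, embeds into `H^(s-1) ⋊ Aut(H)`: there is a homomorphism
`f : Aut^∂(H) → H^(s-1) ⋊ Aut(H)` whose kernel is exactly `I` (so the induced map
on the quotient `PMCG^∂(H)` is an injective homomorphism), sending the unique
representative `(α; 1, a₂, …, aₛ)` of a class to `((a₂⁻¹, …, aₛ⁻¹), α)`.
Here the number of subgroups is `s + 1 ≥ 1`, and in the chosen realization of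
`Aut^∂(H)` inside `H^(s+1) ⋊ Aut(H)` the tuple `(α; a₀, …, aₛ)` corresponds to the
element with `left i = aᵢ⁻¹` and `right = α`. -/
theorem stmt5 {s : ℕ} (C : Fin (s + 1) → Subgroup H) :
    ∃ f : AutBd C →* SDProd H s,
      (∀ x : AutBd C,
          (f x = 1 ↔ ∃ h : H,
            (x : SDProd H (s + 1)) = ⟨fun _ => h⁻¹, MulAut.conj h⟩)) ∧
      ∀ x : AutBd C, (x : SDProd H (s + 1)).left 0 = 1 →
        f x = ⟨fun j => (x : SDProd H (s + 1)).left j.succ,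
               (x : SDProd H (s + 1)).right⟩ :=
  ⟨(SDProd.normalizedTail s).comp (AutBd C).subtype,
    fun _ => SDProd.normalizedTail_eq_one_iff,
    fun _ hx => SDProd.normalizedTail_of_left_zero hx⟩
end

section
/- If H is finitely generated and residually finite, then for subgroups C_1,...,C_s of H the group PMCG^∂(H) is residually finite. -/
variable (H : Type*) [Group H]

variable {H}

lemma finite_monoidHom' (hfg : Group.FG H) (K : Type) [Group K] [Finite K] :
    Finite (H →* K) := by
  obtain ⟨S, hS⟩ := hfg.out
  refine Finite.of_injective (fun f => (fun s : S => f s)) ?_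
  intro f g hfg'
  refine MonoidHom.eq_of_eqOn_dense hS ?_
  intro x hx
  exact congrFun hfg' ⟨x, hx⟩

lemma exists_charN (hfg : Group.FG H)
    (hrf : ∀ g : H, g ≠ 1 → ∃ (K : Type) (_ : Group K) (_ : Finite K) (φ : H →* K), φ g ≠ 1)
    {g : H} (hg : g ≠ 1) :
    ∃ N : Subgroup H, N.Normal ∧ (∀ α : MulAut H, N.map α.toMonoidHom = N) ∧
      Finite (H ⧸ N) ∧ g ∉ N := by
  obtain ⟨K, _, _, φ, hφ⟩ := hrf g hg
  set N : Subgroup H := ⨅ ψ : H →* K, ψ.ker with hN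
  have hmem : ∀ x : H, x ∈ N ↔ ∀ ψ : H →* K, ψ x = 1 := by
    intro x; simp [hN, Subgroup.mem_iInf, MonoidHom.mem_ker]
  have hnormal : N.Normal := by
    constructor
    intro n hn h
    rw [hmem] at hn ⊢
    intro ψ; simp [hn ψ]
  have hcomap : ∀ α : MulAut H, N.comap α.toMonoidHom = N := by
    intro α; ext x
    simp only [Subgroup.mem_comap, hmem]
    constructor
    · intro hx ψ
      have := hx (ψ.comp α.symm.toMonoidHom)
      simpa using this
    · intro hx ψ; exact hx (ψ.comp α.toMonoidHom)
  have hmap : ∀ α : MulAut H, N.map α.toMonoidHom = N := by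
    intro α
    rw [Subgroup.map_equiv_eq_comap_symm']
    exact hcomap α.symm
  have hfinHom : Finite (H →* K) := finite_monoidHom' hfg K
  let f : H →* ((H →* K) → K) := Pi.monoidHom (fun ψ => ψ)
  have hker : f.ker = N := by
    ext x
    simp [MonoidHom.mem_ker, hmem, f, funext_iff, Pi.monoidHom]
  have hfin : Finite (H ⧸ N) := by
    rw [← hker]
    exact Finite.of_injective _ (QuotientGroup.kerLift_injective f)
  refine ⟨N, hnormal, hmap, hfin, ?_⟩
  intro h
  exact hφ ((hmem g).1 h φ)

lemma conj_swap (α : MulAut H) (h : H) :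
    α * MulAut.conj h = MulAut.conj (α h) * α := by
  ext g
  show α (h * g * h⁻¹) = α h * α g * (α h)⁻¹
  simp only [map_mul, map_inv]

/-- the map `(a, α) ↦ ((aᵢ a₀⁻¹)ᵢ, conj a₀ * α)`, whose kernel is exactly `I`. -/
def psiSD (n : ℕ) : SDProd H (n + 1) →* SDProd H (n + 1) where
  toFun x := ⟨fun i => x.left i * (x.left 0)⁻¹, MulAut.conj (x.left 0) * x.right⟩
  map_one' := by
    refine SemidirectProduct.ext ?_ ?_
    · funext i; simp
    · simp
  map_mul' x y := by
    refine SemidirectProduct.ext ?_ ?_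
    · funext i
      show (x * y).left i * ((x * y).left 0)⁻¹ = _
      simp only [SemidirectProduct.mul_left, Pi.mul_apply]
      show x.left i * x.right (y.left i) * (x.left 0 * x.right (y.left 0))⁻¹ =
        (x.left i * (x.left 0)⁻¹) *
          ((MulAut.conj (x.left 0) * x.right) (y.left i * (y.left 0)⁻¹))
      simp only [MulAut.mul_apply, MulAut.conj_apply, map_mul, map_inv]
      group
    · show MulAut.conj ((x * y).left 0) * (x * y).right = _
      simp only [SemidirectProduct.mul_left, SemidirectProduct.mul_right, Pi.mul_apply]
      have h0 : (autPi H _ x.right y.left) 0 = x.right (y.left 0) := rfl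
      rw [h0]
      show MulAut.conj (x.left 0 * x.right (y.left 0)) * (x.right * y.right) =
        (MulAut.conj (x.left 0) * x.right) * (MulAut.conj (y.left 0) * y.right)
      rw [map_mul]
      calc MulAut.conj (x.left 0) * MulAut.conj (x.right (y.left 0)) * (x.right * y.right)
          = MulAut.conj (x.left 0) * (MulAut.conj (x.right (y.left 0)) * x.right) * y.right := by
            group
        _ = MulAut.conj (x.left 0) * (x.right * MulAut.conj (y.left 0)) * y.right := by
            rw [← conj_swap]
        _ = _ := by group

lemma psiSD_kill (n : ℕ) (h : H) :
    psiSD n (⟨fun _ => h⁻¹, MulAut.conj h⟩ : SDProd H (n + 1)) = 1 := by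
  refine SemidirectProduct.ext ?_ ?_
  · funext i
    show h⁻¹ * (h⁻¹)⁻¹ = 1; simp
  · show MulAut.conj h⁻¹ * MulAut.conj h = 1
    rw [← map_mul]; simp

lemma psiSD_eq_one (n : ℕ) (x : SDProd H (n + 1)) (hx : psiSD n x = 1) :
    x = ⟨fun _ => ((x.left 0)⁻¹)⁻¹, MulAut.conj ((x.left 0)⁻¹)⟩ := by
  have hl : ∀ i, x.left i * (x.left 0)⁻¹ = 1 := by
    intro i
    have := congrArg SemidirectProduct.left hx
    exact congrFun this i
  have hr : MulAut.conj (x.left 0) * x.right = 1 := congrArg SemidirectProduct.right hx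
  refine SemidirectProduct.ext ?_ ?_
  · funext i
    show x.left i = ((x.left 0)⁻¹)⁻¹
    rw [inv_inv]
    exact mul_inv_eq_one.mp (hl i)
  · show x.right = MulAut.conj ((x.left 0)⁻¹)
    rw [map_inv]
    exact eq_inv_of_mul_eq_one_right hr

/-- induced automorphism on the quotient by an automorphism-invariant normal subgroup. -/
def autQuot (N : Subgroup H) [N.Normal]
    (hchar : ∀ α : MulAut H, N.map α.toMonoidHom = N) :
    MulAut H →* MulAut (H ⧸ N) where
  toFun α := QuotientGroup.congr N N α (hchar α)
  map_one' := by
    ext x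
    induction x using QuotientGroup.induction_on
    rfl
  map_mul' α β := by
    ext x
    induction x using QuotientGroup.induction_on
    rfl

lemma autQuot_mk (N : Subgroup H) [N.Normal]
    (hchar : ∀ α : MulAut H, N.map α.toMonoidHom = N) (α : MulAut H) (g : H) :
    autQuot N hchar α (QuotientGroup.mk g) = QuotientGroup.mk (α g) := rfl

/-- induced map of semidirect products. -/
def sdMap (N : Subgroup H) [N.Normal]
    (hchar : ∀ α : MulAut H, N.map α.toMonoidHom = N) (n : ℕ) :
    SDProd H n →* SDProd (H ⧸ N) n :=
  SemidirectProduct.map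
    (Pi.monoidHom (fun i => (QuotientGroup.mk' N).comp (Pi.evalMonoidHom (fun _ => H) i)))
    (autQuot N hchar)
    (by
      intro α
      ext a i
      rfl)

instance mulAutFinite (Q : Type*) [Group Q] [Finite Q] : Finite (MulAut Q) :=
  Finite.of_injective (fun e => (e : Q → Q)) (fun a b hab => by
    ext q; exact congrFun hab q)

instance sdFinite (Q : Type*) [Group Q] [Finite Q] (n : ℕ) : Finite (SDProd Q n) :=
  Finite.of_injective (fun x => (x.left, x.right)) (fun a b hab => by
    refine SemidirectProduct.ext ?_ ?_
    · exact congrArg Prod.fst hab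
    · exact congrArg Prod.snd hab)
/-- If `H` is finitely generated and residually finite, then for any subgroups
`C₁, …, Cₛ ≤ H` the group `PMCG^∂(H)`, i.e. the quotient of `Aut^∂(H)` by the normal
subgroup `I = {(τ_h; h,…,h) : h ∈ H}`, is residually finite: every element of
`Aut^∂(H)` not lying in `I` can be separated from `I` by a homomorphism to a finite
group which kills `I`. -/
theorem stmt6 (hfg : Group.FG H)
    (hrf : ∀ g : H, g ≠ 1 → ∃ (K : Type) (_ : Group K) (_ : Finite K) (φ : H →* K), φ g ≠ 1)
    {s : ℕ} (C : Fin (s + 1) → Subgroup H) :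
    ∀ x : AutBd C,
      (∀ h : H, (x : SDProd H (s + 1)) ≠ ⟨fun _ => h⁻¹, MulAut.conj h⟩) →
      ∃ (K : Type) (_ : Group K) (_ : Finite K) (φ : AutBd C →* K),
        (∀ y : AutBd C,
          (∃ h : H, (y : SDProd H (s + 1)) = ⟨fun _ => h⁻¹, MulAut.conj h⟩) → φ y = 1) ∧
        φ x ≠ 1 := by
  intro x hx
  set z : SDProd H (s + 1) := psiSD s (x : SDProd H (s + 1)) with hzdef
  have hzne : z ≠ 1 := by
    intro h1
    exact hx ((SemidirectProduct.left (x : SDProd H (s + 1)) 0)⁻¹) (psiSD_eq_one s _ h1)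
  obtain ⟨g, hg1, hgsep⟩ : ∃ g : H, g ≠ 1 ∧
      ∀ N : Subgroup H, g ∉ N → ∀ (_ : N.Normal)
        (hchar : ∀ α : MulAut H, N.map α.toMonoidHom = N),
        sdMap N hchar (s + 1) z ≠ 1 := by
    by_cases hL : ∃ i, z.left i ≠ 1
    · obtain ⟨i, hi⟩ := hL
      refine ⟨z.left i, hi, ?_⟩
      intro N hgN hnor hchar h1
      haveI := hnor
      apply hgN
      have hleft := congrFun (congrArg SemidirectProduct.left h1) i
      have : (QuotientGroup.mk (z.left i) : H ⧸ N) = 1 := hleft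
      exact (QuotientGroup.eq_one_iff _).mp this
    · push_neg at hL
      have hrne : z.right ≠ 1 := by
        intro hr
        apply hzne
        refine SemidirectProduct.ext ?_ hr
        funext i; exact hL i
      obtain ⟨g₀, hg₀⟩ : ∃ g₀ : H, z.right g₀ ≠ g₀ := by
        by_contra hc
        push_neg at hc
        exact hrne (by ext g; exact hc g)
      refine ⟨(z.right g₀)⁻¹ * g₀, ?_, ?_⟩
      · intro h1
        exact hg₀ (inv_mul_eq_one.mp h1)
      · intro N hgN hnor hchar h1
        haveI := hnor
        apply hgN
        have hright := congrArg SemidirectProduct.right h1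
        have h2 : autQuot N hchar z.right (QuotientGroup.mk g₀) = QuotientGroup.mk g₀ := by
          rw [show autQuot N hchar z.right = (sdMap N hchar (s + 1) z).right from rfl, hright]
          rfl
        rw [autQuot_mk] at h2
        exact QuotientGroup.eq.mp h2
  obtain ⟨N, hnor, hchar, hfinQ, hgN⟩ := exists_charN hfg hrf hg1
  haveI := hnor
  haveI := hfinQ
  let T := SDProd (H ⧸ N) (s + 1)
  haveI hsmall : Small.{0} T := small_of_injective (Finite.equivFin T).injective
  haveI : Finite (Shrink.{0} T) := Finite.of_equiv T (equivShrink T)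
  let me : Shrink.{0} T ≃* T := Shrink.mulEquiv
  let Φ : AutBd C →* T := (sdMap N hchar (s + 1)).comp ((psiSD s).comp (AutBd C).subtype)
  refine ⟨Shrink.{0} T, inferInstance, inferInstance,
    (me.symm.toMonoidHom.comp Φ), ?_, ?_⟩
  · rintro y ⟨h, hy⟩
    have hΦ : Φ y = 1 := by
      show sdMap N hchar (s + 1) (psiSD s ((AutBd C).subtype y)) = 1
      rw [show ((AutBd C).subtype y : SDProd H (s + 1)) = (y : SDProd H (s + 1)) from rfl, hy,
        psiSD_kill, map_one]
    simp only [MonoidHom.comp_apply, hΦ, map_one]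
  · intro h1
    apply hgsep N hgN hnor hchar
    have : me.symm (Φ x) = me.symm 1 := by
      rw [map_one]; exact h1
    exact me.symm.injective this
end

section
/- Let V be a finite set, and for each v in V let P_v be a group with a normal subgroup T_v that is free abelian of finite rank. Set P = ∏_{v∈V} P_v and T = ∏_{v∈V} T_v ≤ P. If P_v/nT_v is residually finite for every v in V and all sufficiently large natural numbers n, then every subgroup Z of T is closed in the profinite topology of P; in particular if Z is normal in P then P/Z is residually finite. -/
/-- A subset `S` of a group `G` is closed in the profinite topology on `G`
(whose basic neighbourhoods of the identity are the finite index normal subgroups). -/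
def ProfinitelyClosed (G : Type*) [Group G] (S : Set G) : Prop :=
  ∀ g ∉ S, ∃ K : Subgroup G, K.Normal ∧ K.FiniteIndex ∧ ∀ k ∈ K, g * k ∉ S

/-- For a normal subgroup with underlying set `S`, this says exactly that the quotient
`G/S` is residually finite: every element outside `S` can be separated from `S` by a
homomorphism to a finite group killing `S`. -/
def QuotientResiduallyFinite (G : Type*) [Group G] (S : Set G) : Prop :=
  ∀ x ∉ S, ∃ (K : Type) (_ : Group K) (_ : Finite K) (φ : G →* K),
    (∀ y ∈ S, φ y = 1) ∧ φ x ≠ 1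



open DirectSum in
lemma keyQ {Q : Type*} [AddCommGroup Q] [AddGroup.FG Q] (q : Q) (hq : q ≠ 0) (m : ℕ) :
    ∃ n, m ≤ n ∧ 1 ≤ n ∧ ∀ x : Q, q ≠ n • x := by
  obtain ⟨k, ι, hι, p, hp, ee, ⟨ψ⟩⟩ := AddCommGroup.equiv_free_prod_directSum_zmod Q
  haveI : ∀ i, NeZero (p i ^ ee i) := fun i => ⟨pow_ne_zero _ (hp i).ne_zero⟩
  by_cases hy : (ψ q).1 = 0
  · -- torsion case
    haveI : Finite (⨁ i, ZMod (p i ^ ee i)) := Finite.of_equiv _ DFinsupp.equivFunOnFintype.symm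
    have hd1 : 1 ≤ Nat.card (⨁ i, ZMod (p i ^ ee i)) := Nat.card_pos
    refine ⟨(m + 1) * Nat.card (⨁ i, ZMod (p i ^ ee i)), ?_, ?_, ?_⟩
    · calc m ≤ m + 1 := by omega
        _ ≤ _ := Nat.le_mul_of_pos_right _ hd1
    · exact Nat.mul_pos (by omega) hd1
    · intro x hx
      apply hq
      apply ψ.injective
      rw [map_zero]
      have h2 : (ψ q).2 = ((m+1) * Nat.card (⨁ i, ZMod (p i ^ ee i))) • (ψ x).2 := by
        rw [hx, map_nsmul]; rfl
      have h2' : (ψ q).2 = 0 := by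
        rw [h2, mul_comm, mul_nsmul, card_nsmul_eq_zero', smul_zero]
      exact Prod.ext (by simpa using hy) (by simpa using h2')
  · obtain ⟨j, hj⟩ : ∃ j, (ψ q).1 j ≠ 0 := by
      by_contra h; push_neg at h; exact hy (Finsupp.ext h)
    refine ⟨m + ((ψ q).1 j).natAbs + 1, by omega, by omega, ?_⟩
    intro x hx
    have h1 : (ψ q).1 j = ((m + ((ψ q).1 j).natAbs + 1 : ℕ) : ℤ) * (ψ x).1 j := by
      conv_lhs => rw [hx, map_nsmul]
      simp [nsmul_eq_mul]
    rcases eq_or_ne ((ψ x).1 j) 0 with h0 | h0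
    · rw [h0, mul_zero] at h1; exact hj h1
    · have h2 : ((m + ((ψ q).1 j).natAbs + 1 : ℕ) : ℤ) ≤ |(ψ q).1 j| :=
        Int.le_of_dvd (abs_pos.mpr hj) ((dvd_abs _ _).mpr ⟨_, h1⟩)
      rw [Int.abs_eq_natAbs] at h2
      have := Int.toNat_le_toNat h2
      simp at this
      omega

lemma keyA {A : Type*} [AddCommGroup A] [AddGroup.FG A] (B : AddSubgroup A) (a : A)
    (ha : a ∉ B) (m : ℕ) : ∃ n, m ≤ n ∧ 1 ≤ n ∧ ∀ b ∈ B, ∀ x : A, a ≠ b + n • x := by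
  have hq : (QuotientAddGroup.mk a : A ⧸ B) ≠ 0 := by
    rwa [Ne, QuotientAddGroup.eq_zero_iff]
  obtain ⟨n, hnm, hn1, hn⟩ := keyQ (QuotientAddGroup.mk a : A ⧸ B) hq m
  refine ⟨n, hnm, hn1, ?_⟩
  intro b hb x hx
  apply hn (QuotientAddGroup.mk x)
  rw [hx]
  have : (QuotientAddGroup.mk b : A ⧸ B) = 0 := (QuotientAddGroup.eq_zero_iff b).mpr hb
  show QuotientAddGroup.mk (b + n • x) = _
  rw [QuotientAddGroup.mk_add]
  rw [this, zero_add]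
  exact QuotientAddGroup.mk_nsmul B x n

lemma sep {G : Type*} [Group G] (T : Subgroup G) (r n : ℕ) [NeZero n]
    (e : T ≃* Multiplicative (Fin r → ℤ))
    (hrf : QuotientResiduallyFinite G {x | ∃ g ∈ T, g ^ n = x}) (g0 : G) :
    ∃ (F : Type) (_ : Group F) (_ : Finite F) (Φ : G →* F),
      (∀ t ∈ T, Φ t = 1 → ∃ h ∈ T, h ^ n = t) ∧
      (g0 ∉ T → ∀ t ∈ T, Φ g0 ≠ Φ t) := by
  classical
  set S : Set G := {x | ∃ g ∈ T, g ^ n = x} with hS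
  have hST : S ⊆ (T : Set G) := by rintro x ⟨g, hg, rfl⟩; exact pow_mem hg n
  have hsep : ∀ x : G, ∃ (K : Type) (_ : Group K) (_ : Finite K) (φ : G →* K),
      (∀ y ∈ S, φ y = 1) ∧ (x ∉ S → φ x ≠ 1) := by
    intro x
    by_cases hx : x ∈ S
    · exact ⟨PUnit, inferInstance, inferInstance, 1, fun _ _ => rfl, fun h => absurd hx h⟩
    · obtain ⟨K, _, _, φ, h1, h2⟩ := hrf x hx
      exact ⟨K, ‹_›, ‹_›, φ, h1, fun _ => h2⟩
  choose K Kg Kf φ hφ1 hφ2 using hsep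
  letI : ∀ x, Group (K x) := Kg
  haveI : ∀ x, Finite (K x) := Kf
  let rep : (Fin r → ZMod n) → G :=
    fun c => ((e.symm (Multiplicative.ofAdd fun i => ((c i).val : ℤ)) : T) : G)
  have hrepT : ∀ c, rep c ∈ T := fun c => SetLike.coe_mem _
  let red : T → (Fin r → ZMod n) := fun t i => ((Multiplicative.toAdd (e t)) i : ZMod n)
  have hkey : ∀ t : T, (t : G) * (rep (red t))⁻¹ ∈ S := by
    intro t
    have hdvd : ∀ i, (n : ℤ) ∣ (Multiplicative.toAdd (e t) i
        - (((Multiplicative.toAdd (e t) i : ZMod n)).val : ℤ)) := by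
      intro i
      rw [← ZMod.intCast_zmod_eq_zero_iff_dvd]
      push_cast
      rw [show ((((Multiplicative.toAdd (e t) i : ZMod n)).val : ℕ) : ZMod n)
          = ((Multiplicative.toAdd (e t) i : ZMod n)) from ZMod.natCast_rightInverse _]
      ring
    choose y hy using hdvd
    refine ⟨((e.symm (Multiplicative.ofAdd y) : T) : G), SetLike.coe_mem _, ?_⟩
    have main : (e.symm (Multiplicative.ofAdd y)) ^ n
        = t * (e.symm (Multiplicative.ofAdd fun i => (((red t) i).val : ℤ)))⁻¹ := by
      apply e.injective
      rw [map_pow, map_mul, map_inv, MulEquiv.apply_symm_apply, MulEquiv.apply_symm_apply,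
        ← ofAdd_nsmul]
      have : Multiplicative.ofAdd (n • y)
          = Multiplicative.ofAdd (Multiplicative.toAdd (e t) - fun i => (((red t) i).val : ℤ)) := by
        congr 1
        funext i
        have h2 : (n : ℤ) * y i = Multiplicative.toAdd (e t) i - ((((red t) i).val : ℤ)) :=
          (hy i).symm
        simp only [Pi.sub_apply, Pi.smul_apply, nsmul_eq_mul]
        exact h2
      rw [this]
      rw [ofAdd_sub]
      rw [ofAdd_toAdd]
      rfl
    calc ((e.symm (Multiplicative.ofAdd y) : T) : G) ^ n
        = (((e.symm (Multiplicative.ofAdd y) ^ n : T)) : G) := by rw [SubmonoidClass.coe_pow]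
      _ = (t : G) * (rep (red t))⁻¹ := by rw [main]; rfl
  have hcomm : ∀ a b : G, a ∈ T → b ∈ T → Commute a b := by
    intro a b haT hbT
    have : (⟨a, haT⟩ * ⟨b, hbT⟩ : T) = ⟨b, hbT⟩ * ⟨a, haT⟩ :=
      e.injective (by rw [map_mul, map_mul, mul_comm])
    exact Subtype.ext_iff.mp this
  refine ⟨(∀ c : Fin r → ZMod n, K (rep c)) × (∀ c : Fin r → ZMod n, K (g0 * (rep c)⁻¹)),
    inferInstance, inferInstance,
    { toFun := fun x => (fun c => φ (rep c) x, fun c => φ (g0 * (rep c)⁻¹) x)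
      map_one' := by
        refine Prod.ext ?_ ?_ <;> funext c <;> simp
      map_mul' := by
        intro x y
        refine Prod.ext ?_ ?_ <;> funext c <;> simp }, ?_, ?_⟩
  · intro t ht hΦt
    simp only [MonoidHom.coe_mk, OneHom.coe_mk, Prod.ext_iff] at hΦt
    obtain ⟨ha, -⟩ := hΦt
    set c := red ⟨t, ht⟩ with hc
    have h1 : φ (rep c) t = 1 := congrFun ha c
    have h2 : φ (rep c) (t * (rep c)⁻¹) = 1 := hφ1 _ _ (hkey ⟨t, ht⟩)
    rw [map_mul, map_inv, h1, one_mul, inv_eq_one] at h2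
    have hrepS : rep c ∈ S := by
      by_contra hns
      exact hφ2 _ hns h2
    obtain ⟨h2', hh2, hh2e⟩ := hrepS
    obtain ⟨h1', hh1, hh1e⟩ := hkey ⟨t, ht⟩
    refine ⟨h1' * h2', mul_mem hh1 hh2, ?_⟩
    rw [(hcomm h1' h2' hh1 hh2).mul_pow, hh1e, hh2e]
    exact inv_mul_cancel_right t (rep c)
  · intro hg0 t ht heq
    simp only [MonoidHom.coe_mk, OneHom.coe_mk, Prod.ext_iff] at heq
    obtain ⟨-, hb⟩ := heq
    set c := red ⟨t, ht⟩ with hc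
    have h1 : φ (g0 * (rep c)⁻¹) g0 = φ (g0 * (rep c)⁻¹) t := congrFun hb c
    have h2 : φ (g0 * (rep c)⁻¹) (t * (rep c)⁻¹) = 1 := hφ1 _ _ (hkey ⟨t, ht⟩)
    have hns : g0 * (rep c)⁻¹ ∉ S := by
      intro hmem
      apply hg0
      have hmT : g0 * (rep c)⁻¹ ∈ T := hST hmem
      have := mul_mem hmT (hrepT c)
      simpa using this
    apply hφ2 _ hns
    rw [map_mul, map_inv, h1]
    rw [map_mul, map_inv] at h2
    exact h2

/-- Let `V` be a finite set and, for `v ∈ V`, let `P v` be a group with a normal subgroup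
`T v` which is free abelian of finite rank; let `P = ∏ P v` and `T = ∏ T v ≤ P`.
If `P v / n(T v)` is residually finite for every `v` and all sufficiently large `n`
(where `n(T v) = {gⁿ : g ∈ T v}`), then every subgroup `Z ≤ T` is closed in the profinite
topology of `P`; in particular, if `Z` is normal in `P` then `P/Z` is residually finite. -/
theorem stmt7 {V : Type*} [Finite V] (P : V → Type*) [∀ v, Group (P v)]
    (T : ∀ v, Subgroup (P v)) (hTnorm : ∀ v, (T v).Normal)
    (hTfree : ∀ v, ∃ n : ℕ, Nonempty (T v ≃* Multiplicative (Fin n → ℤ)))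
    (hRF : ∃ n₀ : ℕ, ∀ n ≥ n₀, ∀ v,
      QuotientResiduallyFinite (P v) {x | ∃ g ∈ T v, g ^ n = x})
    (Z : Subgroup (∀ v, P v)) (hZ : Z ≤ Subgroup.pi Set.univ T) :
    ProfinitelyClosed (∀ v, P v) (Z : Set (∀ v, P v)) ∧
    (Z.Normal → QuotientResiduallyFinite (∀ v, P v) (Z : Set (∀ v, P v))) := by
  classical
  obtain ⟨m, hm⟩ := hRF
  choose r e0 using hTfree
  have e : ∀ v, ((T v) ≃* Multiplicative (Fin (r v) → ℤ)) := fun v => (e0 v).some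
  haveI := Fintype.ofFinite V
  have main : ProfinitelyClosed (∀ v, P v) (Z : Set (∀ v, P v)) := by
    intro g hg
    have hQ : ∃ nn, m ≤ nn ∧ 1 ≤ nn ∧
        ∀ z ∈ Z, ∀ h : ∀ v, P v, (∀ v, h v ∈ T v) → g ≠ z * h ^ nn := by
      by_cases hgT : ∀ v, g v ∈ T v
      · set A := ∀ v, Fin (r v) → ℤ with hA
        haveI : Module.Finite ℤ A := inferInstance
        haveI : AddGroup.FG A := Module.Finite.iff_addGroup_fg.mp inferInstance
        set Fm : A → (∀ v, P v) := fun a v => ((e v).symm (Multiplicative.ofAdd (a v)) : P v)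
          with hFm
        have hFm_mul : ∀ a b : A, Fm (a + b) = Fm a * Fm b := by
          intro a b; funext v
          show ((e v).symm (Multiplicative.ofAdd (a v + b v)) : P v) = _
          rw [ofAdd_add, map_mul]; rfl
        have hFm_inj : Function.Injective Fm := by
          intro a b hab
          funext v
          have h1 : ((e v).symm (Multiplicative.ofAdd (a v)) : P v)
              = ((e v).symm (Multiplicative.ofAdd (b v)) : P v) := congrFun hab v
          have h2 := (e v).symm.injective (Subtype.ext h1)
          exact Multiplicative.ofAdd.injective h2
        have hFm_pow : ∀ (k : ℕ) (a : A), Fm (k • a) = (Fm a) ^ k := by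
          intro k a; funext v
          show ((e v).symm (Multiplicative.ofAdd (k • a v)) : P v) = _
          rw [ofAdd_nsmul, map_pow]
          rw [SubmonoidClass.coe_pow]
          rfl
        set B : AddSubgroup A :=
          { carrier := {a | Fm a ∈ Z}
            zero_mem' := by
              show Fm 0 ∈ Z
              have h0 : Fm 0 = 1 := by
                funext v
                show ((e v).symm (Multiplicative.ofAdd (0 : Fin (r v) → ℤ)) : P v) = 1
                rw [ofAdd_zero, map_one]; rfl
              rw [h0]; exact one_mem Z
            add_mem' := by
              intro a b ha hb
              show Fm (a + b) ∈ Z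
              rw [hFm_mul]; exact mul_mem ha hb
            neg_mem' := by
              intro a ha
              show Fm (-a) ∈ Z
              have hinv : Fm (-a) = (Fm a)⁻¹ := by
                funext v
                show ((e v).symm (Multiplicative.ofAdd (-(a v))) : P v) = _
                rw [ofAdd_neg, map_inv]; rfl
              rw [hinv]; exact inv_mem ha } with hB
        set a0 : A := fun v => Multiplicative.toAdd (e v ⟨g v, hgT v⟩) with ha0def
        have ha0 : Fm a0 = g := by
          funext v
          show ((e v).symm (Multiplicative.ofAdd (Multiplicative.toAdd (e v ⟨g v, hgT v⟩))) : P v)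
            = g v
          rw [ofAdd_toAdd, MulEquiv.symm_apply_apply]
        have ha0B : a0 ∉ B := by
          intro hmem
          exact hg (by rw [← ha0]; exact hmem)
        obtain ⟨nn, h1, h2, h3⟩ := keyA B a0 ha0B m
        refine ⟨nn, h1, h2, ?_⟩
        intro z hz h hh heq
        have hzT : ∀ v, z v ∈ T v := fun v => (Subgroup.mem_pi Set.univ).mp (hZ hz) v (Set.mem_univ v)
        set b : A := fun v => Multiplicative.toAdd (e v ⟨z v, hzT v⟩) with hbdef
        set x : A := fun v => Multiplicative.toAdd (e v ⟨h v, hh v⟩) with hxdef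
        have hbz : Fm b = z := by
          funext v
          show ((e v).symm (Multiplicative.ofAdd (Multiplicative.toAdd (e v ⟨z v, hzT v⟩))) : P v)
            = z v
          rw [ofAdd_toAdd, MulEquiv.symm_apply_apply]
        have hxh : Fm x = h := by
          funext v
          show ((e v).symm (Multiplicative.ofAdd (Multiplicative.toAdd (e v ⟨h v, hh v⟩))) : P v)
            = h v
          rw [ofAdd_toAdd, MulEquiv.symm_apply_apply]
        refine h3 b (show Fm b ∈ Z by rw [hbz]; exact hz) x ?_
        apply hFm_inj
        rw [hFm_mul, hFm_pow, hbz, hxh, ha0, heq]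
      · refine ⟨max m 1, le_max_left _ _, le_max_right _ _, ?_⟩
        intro z hz h hh heq
        apply hgT
        intro v
        rw [heq]
        exact mul_mem ((Subgroup.mem_pi Set.univ).mp (hZ hz) v (Set.mem_univ v))
          (pow_mem (hh v) _)
    obtain ⟨nn, hnm, hn1, hQn⟩ := hQ
    haveI : NeZero nn := ⟨by omega⟩
    have hsep := fun v => sep (T v) (r v) nn (e v) (hm nn hnm v) (g v)
    choose F Fg Ff Φ hΦ1 hΦ2 using hsep
    letI : ∀ v, Group (F v) := Fg
    haveI : ∀ v, Finite (F v) := Ff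
    set Ψ : (∀ v, P v) →* ∀ v, F v :=
      { toFun := fun p v => Φ v (p v)
        map_one' := by funext v; simp
        map_mul' := by intro p q; funext v; simp } with hΨ
    refine ⟨Ψ.ker, inferInstance, inferInstance, ?_⟩
    intro k hk hcon
    rw [MonoidHom.mem_ker] at hk
    have hΨk : ∀ v, Φ v (k v) = 1 := fun v => congrFun hk v
    have hzT : ∀ v, (g * k) v ∈ T v := fun v =>
      (Subgroup.mem_pi Set.univ).mp (hZ hcon) v (Set.mem_univ v)
    have hgT : ∀ v, g v ∈ T v := by
      intro v
      by_contra hgv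
      apply hΦ2 v hgv _ (hzT v)
      have h1 : Φ v ((g * k) v) = Φ v (g v) * Φ v (k v) := by rw [Pi.mul_apply, map_mul]
      rw [h1, hΨk v, mul_one]
    have hkT : ∀ v, k v ∈ T v := by
      intro v
      have h1 : k v = (g v)⁻¹ * ((g * k) v) := by rw [Pi.mul_apply]; group
      rw [h1]; exact mul_mem (inv_mem (hgT v)) (hzT v)
    have hx : ∀ v, ∃ h ∈ T v, h ^ nn = k v := fun v => hΦ1 v _ (hkT v) (hΨk v)
    choose h hh1 hh2 using hx
    refine hQn (g * k) hcon (fun v => (h v)⁻¹) (fun v => inv_mem (hh1 v)) ?_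
    have h1 : (fun v => (h v)⁻¹) ^ nn = k⁻¹ := by
      funext v
      show ((h v)⁻¹) ^ nn = (k v)⁻¹
      rw [inv_pow, hh2 v]
    rw [h1]
    group
  refine ⟨main, ?_⟩
  intro hZn x hx
  obtain ⟨Kk, hKn, hKf, hK⟩ := main x hx
  haveI := hKn; haveI := hKf; haveI := hZn
  haveI : (Kk ⊔ Z).Normal := Subgroup.sup_normal Kk Z
  haveI : (Kk ⊔ Z).FiniteIndex := Subgroup.finiteIndex_of_le le_sup_left
  haveI : Small.{0} ((∀ v, P v) ⧸ (Kk ⊔ Z)) := by infer_instance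
  let μ : Shrink.{0} ((∀ v, P v) ⧸ (Kk ⊔ Z)) ≃* ((∀ v, P v) ⧸ (Kk ⊔ Z)) := Shrink.mulEquiv
  refine ⟨Shrink.{0} ((∀ v, P v) ⧸ (Kk ⊔ Z)), inferInstance, inferInstance,
    (μ.symm.toMonoidHom.comp (QuotientGroup.mk' (Kk ⊔ Z))), ?_, ?_⟩
  · intro y hy
    have h1 : (QuotientGroup.mk' (Kk ⊔ Z)) y = 1 := by
      rw [QuotientGroup.mk'_apply, QuotientGroup.eq_one_iff]
      exact Subgroup.mem_sup_right hy
    show μ.symm ((QuotientGroup.mk' (Kk ⊔ Z)) y) = 1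
    rw [h1, map_one]
  · intro hcon
    have h1 : (QuotientGroup.mk' (Kk ⊔ Z)) x = 1 := by
      have h2 : μ.symm ((QuotientGroup.mk' (Kk ⊔ Z)) x) = μ.symm 1 := by
        rw [map_one]; exact hcon
      exact μ.symm.injective h2
    rw [QuotientGroup.mk'_apply, QuotientGroup.eq_one_iff] at h1
    have hxN : x ∈ ((Kk ⊔ Z : Subgroup (∀ v, P v)) : Set (∀ v, P v)) := h1
    rw [Subgroup.mul_normal] at hxN
    obtain ⟨kk, hkk, z, hz, hprod⟩ := hxN
    have hconj : x⁻¹ * kk⁻¹ * x ∈ Kk := by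
      have := hKn.conj_mem kk⁻¹ (inv_mem hkk) x⁻¹
      simpa using this
    apply hK _ hconj
    have hxz : x * (x⁻¹ * kk⁻¹ * x) = z := by
      rw [← hprod]; group
    rw [hxz]
    exact hz
end

section
/- Let G be a finitely generated group and α ∈ Aut(G). Suppose there is a homomorphism ψ: G → K with K finite and an element g ∈ G such that ψ(g) is not conjugate to ψ(α(g)) in K. Then there is a homomorphism θ̂: Out(G) → L to a finite group L such that θ̂(α̂) ≠ 1, where α̂ is the image of α in Out(G). In particular, α is not inner. -/
lemma homFinite (G K : Type*) [Group G] [Group K] (hfg : Group.FG G) [Finite K] :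
    Finite (G →* K) := by
  obtain ⟨S, hS, hSfin⟩ := Group.fg_iff.mp hfg
  have : Finite S := hSfin
  have hinj : Function.Injective (fun φ : G →* K => (fun s : S => φ s)) := by
    intro φ₁ φ₂ hφ
    apply MonoidHom.eq_of_eqOn_dense hS
    intro s hs
    exact congrFun hφ ⟨s, hs⟩
  exact Finite.of_injective _ hinj

/-- Conjugacy of homomorphisms. -/
def homSetoid (G K : Type*) [Group G] [Group K] : Setoid (G →* K) where
  r φ₁ φ₂ := ∃ k : K, ∀ y, φ₂ y = k * φ₁ y * k⁻¹
  iseqv := by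
    constructor
    · intro φ; exact ⟨1, by simp⟩
    · rintro φ₁ φ₂ ⟨k, hk⟩
      exact ⟨k⁻¹, fun y => by rw [hk y]; group⟩
    · rintro φ₁ φ₂ φ₃ ⟨k, hk⟩ ⟨l, hl⟩
      exact ⟨l * k, fun y => by rw [hl y, hk y]; group⟩

/-- Grossman's criterion. Let `G` be a finitely generated group and `α ∈ Aut(G)`.
If there is a homomorphism `ψ : G → K` to a finite group `K` and an element `g ∈ G`
such that `ψ(g)` is not conjugate to `ψ(α(g))` in `K`, then there is a homomorphism
`θ̂ : Out(G) → L` to a finite group `L` (given here by a homomorphism `θ : Aut(G) → L`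
killing all inner automorphisms) with `θ̂(α̂) ≠ 1`; in particular `α` is not inner. -/
theorem stmt9 (G : Type*) [Group G] (hfg : Group.FG G) (α : MulAut G)
    (K : Type*) [Group K] [Finite K] (ψ : G →* K) (g : G)
    (h : ¬ IsConj (ψ g) (ψ (α g))) :
    (∃ (L : Type) (_ : Group L) (_ : Finite L) (θ : MulAut G →* L),
        (∀ x : G, θ (MulAut.conj x) = 1) ∧ θ α ≠ 1) ∧
    ∀ x : G, α ≠ MulAut.conj x := by
  have hfin : Finite (G →* K) := homFinite G K hfg
  set Q := Quotient (homSetoid G K) with hQ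
  have hQfin : Finite Q := Quotient.finite _
  -- the action of MulAut G on Q
  have key : ∀ (β : MulAut G) (φ₁ φ₂ : G →* K), (homSetoid G K).r φ₁ φ₂ →
      (homSetoid G K).r (φ₁.comp β.symm.toMonoidHom) (φ₂.comp β.symm.toMonoidHom) := by
    rintro β φ₁ φ₂ ⟨k, hk⟩
    exact ⟨k, fun y => hk _⟩
  let act : MulAut G → Q → Q := fun β =>
    Quotient.map (fun φ : G →* K => φ.comp β.symm.toMonoidHom) (key β)
  have act_mk : ∀ (β : MulAut G) (φ : G →* K),
      act β ⟦φ⟧ = ⟦φ.comp β.symm.toMonoidHom⟧ := fun β φ => rfl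
  have act_comp : ∀ (β γ : MulAut G) (q : Q), act (β * γ) q = act β (act γ q) := by
    intro β γ q
    induction q using Quotient.inductionOn with
    | h φ => simp only [act_mk]; apply Quotient.sound; exact ⟨1, fun y => by simp; rfl⟩
  have act_one : ∀ q : Q, act 1 q = q := by
    intro q
    induction q using Quotient.inductionOn with
    | h φ => rw [act_mk]; apply Quotient.sound; exact ⟨1, fun y => by simp; rfl⟩
  let θ : MulAut G →* Equiv.Perm Q :=
    { toFun := fun β => ⟨act β, act β⁻¹, fun q => by rw [← act_comp, inv_mul_cancel, act_one],
        fun q => by rw [← act_comp, mul_inv_cancel, act_one]⟩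
      map_one' := Equiv.ext fun q => act_one q
      map_mul' := fun β γ => Equiv.ext fun q => act_comp β γ q }
  have hinner : ∀ x : G, θ (MulAut.conj x) = 1 := by
    intro x
    apply Equiv.ext
    intro q
    induction q using Quotient.inductionOn with
    | h φ =>
      show act (MulAut.conj x) ⟦φ⟧ = ⟦φ⟧
      rw [act_mk]
      apply Quotient.sound
      refine ⟨φ x, fun y => ?_⟩
      simp [MulAut.conj]
      group
  have halpha : θ α ≠ 1 := by
    intro hθ
    have h1 : (θ α) ⟦ψ.comp α.toMonoidHom⟧ = ⟦ψ.comp α.toMonoidHom⟧ := by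
      rw [hθ]; rfl
    have h1' : (⟦(ψ.comp α.toMonoidHom).comp α.symm.toMonoidHom⟧ : Q) = ⟦ψ.comp α.toMonoidHom⟧ := h1
    have h2 : (homSetoid G K).r ((ψ.comp α.toMonoidHom).comp α.symm.toMonoidHom) (ψ.comp α.toMonoidHom) :=
      Quotient.exact h1'
    obtain ⟨k, hk⟩ := h2
    have hg := hk g
    simp only [MonoidHom.comp_apply, MulEquiv.coe_toMonoidHom, MulEquiv.apply_symm_apply] at hg
    exact h ⟨⟨k, k⁻¹, by simp, by simp⟩, by simp [SemiconjBy]; rw [hg]; group⟩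
  obtain ⟨n, ⟨e⟩⟩ := Finite.exists_equiv_fin Q
  let ρ : Equiv.Perm Q →* Equiv.Perm (Fin n) :=
    { toFun := fun σ => e.permCongr σ
      map_one' := by ext q; simp [Equiv.permCongr]
      map_mul' := fun σ τ => by ext q; simp [Equiv.permCongr] }
  have hρinj : Function.Injective ρ := fun σ τ hστ => by
    have := congrArg e.symm.permCongr hστ
    simpa [ρ, Equiv.permCongr] using this
  refine ⟨⟨Equiv.Perm (Fin n), inferInstance, inferInstance, ρ.comp θ, 
    fun x => by simp [hinner x, map_one], 
    fun hc => halpha (hρinj (by simpa using hc))⟩, ?_⟩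
  intro x hx
  apply h
  rw [hx]
  exact ⟨⟨ψ x, (ψ x)⁻¹, by simp, by simp⟩, by simp [SemiconjBy, MulAut.conj]⟩
end

section
/- If a group A has a residually p-finite normal subgroup B of p-power index, then A itself is residually p-finite. -/
/-- A group is residually `p`-finite if every nontrivial element has nontrivial image
in some finite `p`-group quotient. -/
def ResiduallyPFinite (p : ℕ) (G : Type*) [Group G] : Prop :=
  ∀ g : G, g ≠ 1 →
    ∃ (K : Type) (_ : Group K) (_ : Finite K), IsPGroup p K ∧ ∃ φ : G →* K, φ g ≠ 1

/-- Shrink a finite `p`-group witness down to `Type 0`. -/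
lemma shrink_witness {p : ℕ} {A : Type*} [Group A] (G : Type*) [Group G] [Finite G]
    (hG : IsPGroup p G) (ψ : A →* G) (a : A) (h : ψ a ≠ 1) :
    ∃ (K : Type) (_ : Group K) (_ : Finite K), IsPGroup p K ∧ ∃ φ : A →* K, φ a ≠ 1 := by
  obtain ⟨K, instK, instF, ⟨e⟩⟩ := Finite.exists_type_univ_nonempty_mulEquiv.{_, 0} G
  refine ⟨K, instK, Finite.of_fintype K, hG.of_equiv e, e.toMonoidHom.comp ψ, ?_⟩
  intro hc
  apply h
  have : e (ψ a) = e 1 := by simpa using hc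
  exact e.injective this

/-- If a group `A` has a residually `p`-finite normal subgroup `B` of `p`-power index,
then `A` is residually `p`-finite. -/
theorem stmt11 (p : ℕ) (hp : p.Prime) (A : Type*) [Group A] (B : Subgroup A)
    [B.Normal] (hindex : ∃ k : ℕ, B.index = p ^ k)
    (hB : ResiduallyPFinite p B) :
    ResiduallyPFinite p A := by
  obtain ⟨k, hk⟩ := hindex
  have hpos : B.index ≠ 0 := by
    rw [hk]; exact pow_ne_zero _ hp.pos.ne'
  haveI : B.FiniteIndex := ⟨hpos⟩
  intro a ha
  by_cases haB : a ∈ B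
  · -- a ∈ B : use the residual p-finiteness of B, intersect conjugates of the kernel
    obtain ⟨K, _, _, hK, φ, hφ⟩ := hB ⟨a, haB⟩ (by simpa [Subtype.ext_iff] using ha)
    haveI : Fact p.Prime := ⟨hp⟩
    obtain ⟨m, hm⟩ := hK.exists_card_eq
    set N : Subgroup A := (φ.ker).map B.subtype with hNdef
    have hNB : N ≤ B := by rintro x ⟨y, _, rfl⟩; exact y.2
    have hmemN : ∀ y : A, y ∈ N ↔ ∃ h : y ∈ B, (⟨y, h⟩ : B) ∈ φ.ker := by
      intro y
      constructor
      · rintro ⟨n, hn, rfl⟩; exact ⟨n.2, hn⟩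
      · rintro ⟨h, hy⟩; exact ⟨⟨y, h⟩, hy, rfl⟩
    -- conjugates of N
    set f : A → Subgroup A := fun x => N.map (MulAut.conj x).toMonoidHom with hfdef
    have hmemf : ∀ (x y : A), y ∈ f x ↔ x⁻¹ * y * x ∈ N := by
      intro x y
      constructor
      · rintro ⟨n, hn, rfl⟩
        simpa [mul_assoc] using hn
      · intro h
        refine ⟨x⁻¹ * y * x, h, ?_⟩
        simp [mul_assoc]
    have hconjN : ∀ b ∈ B, ∀ y ∈ N, b * y * b⁻¹ ∈ N := by
      rintro b hb y ⟨n, hn, rfl⟩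
      refine ⟨⟨b, hb⟩ * n * ⟨b, hb⟩⁻¹, (MonoidHom.normal_ker φ).conj_mem n hn ⟨b, hb⟩, ?_⟩
      simp
    -- conjugation by an element of B fixes N
    have hfb : ∀ b ∈ B, f b = N := by
      intro b hb
      ext y
      rw [hmemf]
      constructor
      · intro h
        have h2 := hconjN b hb _ h
        have e : b * (b⁻¹ * y * b) * b⁻¹ = y := by group
        rwa [e] at h2
      · intro h
        have h2 := hconjN b⁻¹ (inv_mem hb) y h
        have e : b⁻¹ * y * b⁻¹⁻¹ = b⁻¹ * y * b := by group
        rwa [e] at h2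
    -- f is constant on left cosets of B
    have hfmul : ∀ (x b : A), b ∈ B → f (x * b) = f x := by
      intro x b hb
      show N.map (MulAut.conj (x * b)).toMonoidHom = N.map (MulAut.conj x).toMonoidHom
      have hcomp : (MulAut.conj (x * b)).toMonoidHom =
          (MulAut.conj x).toMonoidHom.comp (MulAut.conj b).toMonoidHom := by
        ext y; simp [mul_assoc]
      rw [hcomp, ← Subgroup.map_map]
      congr 1
      exact hfb b hb
    set fc : A ⧸ B → Subgroup A := fun c => f c.out with hfcdef
    have key : ∀ y : A, fc (y : A ⧸ B) = f y := by
      intro y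
      obtain ⟨h, hh⟩ := QuotientGroup.mk_out_eq_mul B y
      show f (Quotient.out _) = f y
      rw [hh]
      exact hfmul y h h.2
    set M : Subgroup A := ⨅ c : A ⧸ B, fc c with hMdef
    have hMle : ∀ y : A, M ≤ f y := by
      intro y
      have := iInf_le fc (y : A ⧸ B)
      rwa [key] at this
    have hMmem : ∀ z : A, z ∈ M ↔ ∀ y : A, z ∈ f y := by
      intro z
      constructor
      · intro hz y; exact hMle y hz
      · intro hz
        rw [hMdef, Subgroup.mem_iInf]
        intro c
        exact hz c.out
    -- M is normal in A
    haveI hMnormal : M.Normal := by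
      constructor
      intro n hn g
      rw [hMmem] at hn ⊢
      intro y
      rw [hmemf]
      have h2 := hn (g⁻¹ * y)
      rw [hmemf] at h2
      have e : y⁻¹ * (g * n * g⁻¹) * y = (g⁻¹ * y)⁻¹ * n * (g⁻¹ * y) := by group
      rwa [e]
    -- relindex / index computations
    have hNindex : N.index ≠ 0 := by
      have h1 : N.relIndex B * B.index = N.index := Subgroup.relIndex_mul_index hNB
      have h2 : N.relIndex B = φ.ker.index := by
        rw [Subgroup.relIndex, Subgroup.subgroupOf, hNdef,
          Subgroup.comap_map_eq_self_of_injective B.subtype_injective]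
      have h3 : φ.ker.index ≠ 0 := by
        rw [Subgroup.index_ker]
        exact Nat.card_pos.ne'
      rw [← h1, h2]
      exact mul_ne_zero h3 hpos
    have hfindex : ∀ x : A, (f x).index = N.index := by
      intro x
      show (N.map (MulAut.conj x).toMonoidHom).index = N.index
      rw [Subgroup.map_equiv_eq_comap_symm' (MulAut.conj x) N]
      exact Subgroup.index_comap_of_surjective _ (MulAut.conj x).symm.surjective
    have hMindex : M.index ≠ 0 := by
      refine Subgroup.index_iInf_ne_zero fun c => ?_
      show (f c.out).index ≠ 0
      rw [hfindex]; exact hNindex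
    haveI : M.FiniteIndex := ⟨hMindex⟩
    -- B-elements have p-power order mod M
    have hBpow : ∀ b ∈ B, b ^ p ^ m ∈ M := by
      intro b hb
      rw [hMmem]
      intro y
      rw [hmemf]
      have hd : y⁻¹ * b * y ∈ B := Subgroup.Normal.conj_mem' ‹B.Normal› b hb y
      have hpow : y⁻¹ * b ^ p ^ m * y = (y⁻¹ * b * y) ^ p ^ m := by
        have h0 := conj_pow (a := y⁻¹) (b := b) (i := p ^ m)
        rw [inv_inv] at h0
        exact h0.symm
      rw [hpow, hmemN]
      refine ⟨pow_mem hd _, ?_⟩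
      have : (⟨(y⁻¹ * b * y) ^ p ^ m, pow_mem hd _⟩ : B) = (⟨y⁻¹ * b * y, hd⟩ : B) ^ p ^ m := by
        ext; simp
      rw [this, MonoidHom.mem_ker, map_pow, ← hm, pow_card_eq_one']
    -- the quotient is a p-group
    have hquot : IsPGroup p (A ⧸ M) := by
      intro g
      obtain ⟨x, rfl⟩ := QuotientGroup.mk_surjective g
      refine ⟨k + m, ?_⟩
      have hxB : x ^ p ^ k ∈ B := by
        have := Subgroup.pow_index_mem B x
        rwa [hk] at this
      have : x ^ p ^ (k + m) ∈ M := by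
        rw [pow_add, pow_mul]
        exact hBpow _ hxB
      rw [← QuotientGroup.mk_pow]
      rwa [QuotientGroup.eq_one_iff]
    -- a is not in M
    have haM : a ∉ M := by
      intro hM
      have h1 : a ∈ f 1 := hMle 1 hM
      rw [hmemf] at h1
      simp only [one_mul, inv_one, mul_one] at h1
      rw [hmemN] at h1
      obtain ⟨h, hker⟩ := h1
      exact hφ hker
    refine shrink_witness (A ⧸ M) hquot (QuotientGroup.mk' M) a ?_
    simpa [QuotientGroup.eq_one_iff] using haM
  · -- a ∉ B : use the quotient A ⧸ B
    have : IsPGroup p (A ⧸ B) := IsPGroup.of_card (by rw [← Subgroup.index_eq_card, hk])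
    refine shrink_witness (A ⧸ B) this (QuotientGroup.mk' B) a ?_
    simpa [QuotientGroup.eq_one_iff] using haB
end

section
/- If G is a residually p-finite group and N is a finite normal subgroup of G, then G/N is residually p-finite. -/
lemma isPGroup_pi_aux {p : ℕ} {ι : Type*} [Finite ι] {K : ι → Type*} [∀ i, Group (K i)]
    (h : ∀ i, IsPGroup p (K i)) : IsPGroup p (∀ i, K i) := by
  intro x
  cases nonempty_fintype ι
  choose n hn using fun i => h i (x i)
  refine ⟨Finset.univ.sup n, ?_⟩
  ext i
  rw [Pi.pow_apply, Pi.one_apply]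
  obtain ⟨k, hk⟩ := pow_dvd_pow p (Finset.le_sup (f := n) (Finset.mem_univ i))
  rw [hk, pow_mul, hn i, one_pow]

/-- If `G` is residually `p`-finite and `N ⊴ G` is a finite normal subgroup, then `G/N`
is residually `p`-finite. -/
theorem stmt13 (p : ℕ) (hp : p.Prime) (G : Type*) [Group G]
    (hG : ResiduallyPFinite p G) (N : Subgroup G) [N.Normal] [Finite N] :
    ResiduallyPFinite p (G ⧸ N) := by
  intro gbar hgbar
  obtain ⟨g, rfl⟩ := QuotientGroup.mk_surjective gbar
  have hgN : g ∉ N := fun h => hgbar ((QuotientGroup.eq_one_iff g).mpr h)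
  -- index N by Fin m to stay in Type 0
  obtain ⟨m, ⟨e⟩⟩ := Finite.exists_equiv_fin N
  have hne : ∀ i : Fin m, g * ((e.symm i : N) : G)⁻¹ ≠ 1 := by
    intro i h
    rw [mul_inv_eq_one] at h
    exact hgN (h ▸ (e.symm i).2)
  choose K instK instF hpK φ hφ using fun i => hG _ (hne i)
  letI : ∀ i, Group (K i) := instK
  letI : ∀ i, Finite (K i) := instF
  set Φ : G →* (∀ i, K i) := Pi.monoidHom φ with hΦ
  have hPp : IsPGroup p (∀ i, K i) := isPGroup_pi_aux hpK
  -- the key: g is not in Φ.ker ⊔ N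
  have hg : g ∉ Φ.ker ⊔ N := by
    intro h
    rw [← SetLike.mem_coe, Subgroup.mul_normal] at h
    obtain ⟨x, hx, y, hy, hxy⟩ := h
    set i : Fin m := e ⟨y, hy⟩ with hi
    have hyi : ((e.symm i : N) : G) = y := by rw [hi, Equiv.symm_apply_apply]
    apply hφ i
    have : Φ (g * ((e.symm i : N) : G)⁻¹) = 1 := by
      rw [hyi, ← hxy, mul_inv_cancel_right]
      exact hx
    calc φ i (g * ((e.symm i : N) : G)⁻¹)
        = Φ (g * ((e.symm i : N) : G)⁻¹) i := rfl
      _ = 1 := by rw [this]; rfl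
  -- the quotient Q := G ⧸ (Φ.ker ⊔ N)
  set M : Subgroup G := Φ.ker ⊔ N with hM
  haveI : M.Normal := Subgroup.sup_normal Φ.ker N
  -- Q is a p-group
  have hQp : IsPGroup p (G ⧸ M) := by
    intro q
    obtain ⟨x, rfl⟩ := QuotientGroup.mk_surjective q
    obtain ⟨n, hn⟩ := hPp (Φ x)
    refine ⟨n, ?_⟩
    rw [← QuotientGroup.mk_pow, QuotientGroup.eq_one_iff]
    exact Subgroup.mem_sup_left (by rwa [MonoidHom.mem_ker, map_pow])
  -- Q is finite
  have hQfin : Finite (G ⧸ M) := by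
    have h1 : Finite (G ⧸ Φ.ker) :=
      Finite.of_equiv ↥Φ.range (QuotientGroup.quotientKerEquivRange Φ).symm.toEquiv
    exact Finite.of_surjective
      (QuotientGroup.map Φ.ker M (MonoidHom.id G) le_sup_left)
      (fun q => by
        obtain ⟨x, rfl⟩ := QuotientGroup.mk_surjective q
        exact ⟨QuotientGroup.mk x, rfl⟩)
  -- transfer Q to a Type 0 group via Shrink
  haveI : Small.{0} (G ⧸ M) := by infer_instance
  have eqm : Shrink.{0} (G ⧸ M) ≃* (G ⧸ M) := Shrink.mulEquiv
  haveI : Finite (Shrink.{0} (G ⧸ M)) := Finite.of_equiv _ eqm.symm.toEquiv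
  refine ⟨Shrink.{0} (G ⧸ M), inferInstance, inferInstance, hQp.of_equiv eqm.symm, ?_⟩
  refine ⟨(eqm.symm.toMonoidHom.comp
    (QuotientGroup.map N M (MonoidHom.id G) le_sup_right)), ?_⟩
  intro h
  apply hg
  have : QuotientGroup.map N M (MonoidHom.id G) le_sup_right
      (QuotientGroup.mk g) = 1 := by
    have := congrArg eqm h
    simpa using this
  have h2 : (QuotientGroup.mk g : G ⧸ M) = 1 := this
  rwa [QuotientGroup.eq_one_iff] at h2
end

section
/- If H is a finite p-group, then Aut_p(H), the group of automorphisms of H acting trivially on H/([H,H]H^p), is a finite p-group. -/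
/-!
The subgroup `[H,H]Hᵖ` lies in every maximal subgroup `M` of the finite `p`-group `H` (`M` is
normal and `H ⧸ M` is simple and nilpotent, hence cyclic of order `p`), i.e. in the Frattini
subgroup. So an automorphism in `Aut_p(H)` that fixes every value of a map `f : H → H` with
`f h ∈ h[H,H]Hᵖ` fixes a generating set and is trivial: `Aut_p(H)` acts freely on the set of such
maps. That set has `|[H,H]Hᵖ| ^ |H|` elements, a power of `p`, and the order of a group acting
freely divides the size of the set.
-/

variable (p : ℕ) (H : Type*) [Group H]

/-- The verbal subgroup `K_p = [H,H]Hᵖ` generated by all commutators and all `p`-th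
powers; the quotient `H/K_p` is the first mod-`p` homology of `H`. -/
def Kp : Subgroup H := commutator H ⊔ Subgroup.closure {x : H | ∃ g : H, g ^ p = x}

lemma Kp_map_le (α : MulAut H) : (Kp p H).map α.toMonoidHom ≤ Kp p H := by
  rw [Kp, Subgroup.map_sup]
  apply sup_le
  · refine le_trans (Subgroup.characteristic_iff_map_le.mp inferInstance α) le_sup_left
  · rw [MonoidHom.map_closure]
    refine le_trans (Subgroup.closure_mono ?_) le_sup_right
    rintro x ⟨y, ⟨g, hg⟩, rfl⟩
    exact ⟨α g, by rw [← map_pow]; exact congrArg _ hg⟩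

/-- The subgroup `Aut_p(H) ≤ Aut(H)` of automorphisms acting trivially on
`H / [H,H]Hᵖ`. -/
def AutP : Subgroup (MulAut H) where
  carrier := {α : MulAut H | ∀ h : H, h⁻¹ * α h ∈ Kp p H}
  one_mem' := by intro h; simpa using (Kp p H).one_mem
  mul_mem' := by
    intro α β hα hβ h
    have h1 : (h⁻¹ * α h) * (α (h⁻¹ * β h)) ∈ Kp p H := by
      refine mul_mem (hα h) (Kp_map_le p H α ⟨_, hβ h, rfl⟩)
    simpa [map_mul, mul_assoc] using h1
  inv_mem' := by
    intro α hα h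
    have h1 := hα (α⁻¹ h)
    have h2 : ((α⁻¹ h)⁻¹ * h)⁻¹ ∈ Kp p H := by
      refine inv_mem ?_
      simpa using h1
    simpa [mul_inv_rev] using h2

theorem QuotientGroup.isSimpleGroup_of_isCoatom {G : Type*} [Group G] {M : Subgroup G} [M.Normal]
    (hM : IsCoatom M) : IsSimpleGroup (G ⧸ M) :=
  have : IsSimpleOrder (Subgroup (G ⧸ M)) :=
    (OrderIso.isSimpleOrder_iff (β := Set.Ici M) (QuotientGroup.comapMk'OrderIso M)).mpr
      (Set.isSimpleOrder_Ici_iff_isCoatom.mpr hM)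
  { toNontrivial := Subgroup.nontrivial_iff.mp inferInstance
    eq_bot_or_eq_top_of_normal := fun N _ => eq_bot_or_eq_top N }

theorem closure_range_eq_top_of_inv_mul_mem_frattini {G : Type*} [Group G]
    [IsCoatomic (Subgroup G)] {f : G → G} (hf : ∀ g, g⁻¹ * f g ∈ frattini G) :
    Subgroup.closure (Set.range f) = ⊤ := by
  refine frattini_nongenerating (Subgroup.eq_top_iff' _ |>.mpr fun g => ?_)
  rw [← mul_inv_cancel_left (f g) g]
  exact mul_mem (Subgroup.mem_sup_left (Subgroup.subset_closure ⟨g, rfl⟩))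
    (Subgroup.mem_sup_right (by simpa using inv_mem (hf g)))

theorem MulAction.card_dvd_card_of_stabilizer_eq_bot {G X : Type*} [Group G] [MulAction G X]
    (h : ∀ x : X, stabilizer G x = ⊥) : Nat.card G ∣ Nat.card X := by
  rw [Nat.card_congr (selfEquivOrbitsQuotientProd h), Nat.card_prod]
  exact dvd_mul_left _ _

theorem Kp_le_of_isCoatom [Finite H] (hp : p.Prime) (hH : IsPGroup p H) {M : Subgroup H}
    (hM : IsCoatom M) : Kp p H ≤ M := by
  have := Fact.mk hp
  have : Group.IsNilpotent H := hH.isNilpotent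
  have : M.Normal :=
    Subgroup.NormalizerCondition.normal_of_coatom M Group.normalizerCondition_of_isNilpotent hM
  have : IsSimpleGroup (H ⧸ M) := QuotientGroup.isSimpleGroup_of_isCoatom hM
  have : Group.IsNilpotent (H ⧸ M) := (hH.to_quotient M).isNilpotent
  -- from here on `H ⧸ M` carries the `CommGroup` instance of simple nilpotent groups
  have hcard : Nat.card (H ⧸ M) = p := by
    obtain ⟨n, hn⟩ := IsPGroup.iff_card.mp (hH.to_quotient M)
    have hprime : (p ^ n).Prime := hn ▸ IsSimpleGroup.prime_card
    rw [hn, hprime.eq_one_of_pow, pow_one]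
  rw [Kp, sup_le_iff, Subgroup.closure_le]
  constructor
  · simpa using Abelianization.commutator_subset_ker (QuotientGroup.mk' M)
  · rintro _ ⟨g, rfl⟩
    rw [SetLike.mem_coe, ← QuotientGroup.eq_one_iff, QuotientGroup.mk_pow, ← hcard,
      pow_card_eq_one']

theorem Kp_le_frattini [Finite H] (hp : p.Prime) (hH : IsPGroup p H) : Kp p H ≤ frattini H :=
  le_iInf₂ fun _ => Kp_le_of_isCoatom p H hp hH

def kpSections : SubMulAction (AutP p H) (H → H) where
  carrier := {f | ∀ h, h⁻¹ * f h ∈ Kp p H}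
  smul_mem' α f hf h := show h⁻¹ * α.1 (f h) ∈ _ by
    simpa [mul_assoc] using mul_mem (hf h) (α.2 (f h))

theorem card_kpSections [Finite H] :
    Nat.card (kpSections p H) = Nat.card (Kp p H) ^ Nat.card H := by
  let e : kpSections p H ≃ (H → Kp p H) :=
    { toFun f h := ⟨h⁻¹ * f.1 h, f.2 h⟩
      invFun g := ⟨fun h => h * g h, fun h => by simp⟩
      left_inv f := by ext; simp
      right_inv g := by ext; simp }
  rw [Nat.card_congr e, Nat.card_fun]

theorem stabilizer_kpSections_eq_bot [Finite H] (hp : p.Prime) (hH : IsPGroup p H)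
    (f : kpSections p H) : MulAction.stabilizer (AutP p H) f = ⊥ := by
  refine (Subgroup.eq_bot_iff_forall _).mpr fun α hα =>
    Subtype.ext (MulEquiv.toMonoidHom_injective ?_)
  refine MonoidHom.eq_of_eqOn_dense
    (closure_range_eq_top_of_inv_mul_mem_frattini fun h => Kp_le_frattini p H hp hH (f.2 h)) ?_
  rintro _ ⟨h, rfl⟩
  exact congrFun (congrArg Subtype.val hα) h

/-- P. Hall's theorem: if `H` is a finite `p`-group, then `Aut_p(H)`, the group of
automorphisms of `H` acting trivially on `H/([H,H]Hᵖ)`, is a finite `p`-group. -/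
theorem stmt15 (hp : p.Prime) [Finite H] (hH : IsPGroup p H) :
    Finite (AutP p H) ∧ IsPGroup p (AutP p H) := by
  have := Fact.mk hp
  obtain ⟨k, hk⟩ := IsPGroup.iff_card.mp (hH.to_subgroup (Kp p H))
  have hdvd :=
    MulAction.card_dvd_card_of_stabilizer_eq_bot (stabilizer_kpSections_eq_bot p H hp hH)
  rw [card_kpSections, hk, ← pow_mul, Nat.dvd_prime_pow hp] at hdvd
  obtain ⟨m, -, hm⟩ := hdvd
  exact ⟨inferInstance, IsPGroup.of_card hm⟩
end

section
/- Let V be a finite set, and for each v ∈ V let P_v be a group with normal subgroup T_v free abelian of finite rank; set P = ∏ P_v and T = ∏ T_v. Let p be a prime and Z ≤ T a subgroup such that T/Z has no q-torsion for any prime q ≠ p. If P_v/nT_v is residually p-finite for every v and every sufficiently large power n of p, then Z is closed in the pro-p topology on P; in particular, if Z is normal in P then P/Z is residually p-finite. -/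
/-- A subset `S` of a group `G` is closed in the pro-`p` topology on `G`
(whose basic neighbourhoods of the identity are the normal subgroups of `p`-power
index). -/
def ProPClosed (p : ℕ) (G : Type*) [Group G] (S : Set G) : Prop :=
  ∀ g ∉ S, ∃ K : Subgroup G, K.Normal ∧ (∃ k : ℕ, K.index = p ^ k) ∧ ∀ x ∈ K, g * x ∉ S

/-- For a normal subgroup with underlying set `S`, this says exactly that the quotient
`G/S` is residually `p`-finite. -/
def QuotientResiduallyPFinite (p : ℕ) (G : Type*) [Group G] (S : Set G) : Prop :=
  ∀ x ∉ S, ∃ (K : Type) (_ : Group K) (_ : Finite K), IsPGroup p K ∧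
    ∃ φ : G →* K, (∀ y ∈ S, φ y = 1) ∧ φ x ≠ 1

/-!
If `g ∈ T \ Z`, then `T/Z` is a finitely generated abelian group whose torsion is a `p`-group,
so by the structure theorem `g ∉ Z · T^(p^k)` for all large `k`. For each `v`, `T_v / T_v^(p^k)`
is finite, so finitely many separations in the residually `p`-finite group `P_v / T_v^(p^k)` give
a normal subgroup `N_v` of `p`-power index with `N_v ∩ T_v = T_v^(p^k)` and, if `g_v ∉ T_v`,
`g_v N_v ∩ T_v = ∅`. If `g x ∈ Z` with `x ∈ ∏ N_v`, then either some `g_v ∉ T_v`, which the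
second property forbids, or `x ∈ T ∩ ∏ N_v = T^(p^k)`, so `g ∈ Z · T^(p^k)`.
-/

theorem Finsupp.exists_forall_pow_nsmul_ne {ι : Type*} {p : ℕ} (hp : 1 < p) {f : ι →₀ ℤ}
    (hf : f ≠ 0) : ∃ k : ℕ, ∀ g : ι →₀ ℤ, p ^ k • g ≠ f := by
  obtain ⟨j, hj⟩ := Finsupp.ne_iff.mp hf
  refine ⟨(f j).natAbs, fun g hg => ?_⟩
  have hdvd : p ^ (f j).natAbs ∣ (f j).natAbs := by
    conv_rhs => rw [← hg]
    simp [Int.natAbs_mul]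
  exact (Nat.lt_pow_self hp).not_ge (Nat.le_of_dvd (Int.natAbs_pos.mpr hj) hdvd)

theorem AddCommGroup.exists_forall_prime_pow_nsmul_ne {p : ℕ} (hp : p.Prime) {A : Type*}
    [AddCommGroup A] [AddGroup.FG A]
    (htor : ∀ q : ℕ, q.Prime → q ≠ p → ∀ a : A, q • a = 0 → a = 0) {a : A} (ha : a ≠ 0) :
    ∃ k : ℕ, ∀ b : A, p ^ k • b ≠ a := by
  classical
  obtain ⟨n, ι, _, q, hq, e, ⟨φ⟩⟩ := AddCommGroup.equiv_free_prod_directSum_zmod A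
  -- a nontrivial summand `ZMod (q i ^ e i)` contains an element of order `q i` (Cauchy)
  have hqp : ∀ i, e i ≠ 0 → q i = p := by
    intro i hi
    by_contra hne
    have := Fact.mk (hq i)
    have : NeZero (q i ^ e i) := ⟨pow_ne_zero _ (hq i).ne_zero⟩
    obtain ⟨x, hx⟩ := exists_prime_addOrderOf_dvd_card (G := ZMod (q i ^ e i)) (q i)
      (by rw [ZMod.card]; exact dvd_pow_self _ hi)
    let f : ZMod (q i ^ e i) →+ A := φ.symm.toAddMonoidHom.comp
      ((AddMonoidHom.inr (Fin n →₀ ℤ) _).comp (DirectSum.of (fun j => ZMod (q j ^ e j)) i))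
    have hf : Function.Injective f :=
      φ.symm.injective.comp ((Prod.mk_right_injective 0).comp (DirectSum.of_injective i))
    have hb : addOrderOf (f x) = q i := (addOrderOf_injective f hf x).trans hx
    have := htor _ (hq i) hne _ (hb ▸ addOrderOf_nsmul_eq_zero _)
    rw [this, addOrderOf_zero] at hb
    exact (hq i).one_lt.ne hb
  have hφa : φ a ≠ 0 := by simpa using ha
  suffices ∃ k : ℕ, ∀ w, p ^ k • w ≠ φ a from
    this.imp fun k hk b hb => hk (φ b) (by rw [← map_nsmul, hb])
  by_cases hfree : (φ a).1 = 0
  · obtain ⟨j, hj⟩ : ∃ j, (φ a).2 j ≠ 0 := by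
      by_contra! h
      exact hφa (Prod.ext hfree (DFinsupp.ext h))
    have hej : e j ≠ 0 := by
      rintro h0
      have : Subsingleton (ZMod (q j ^ e j)) := by rw [h0, pow_zero]; infer_instance
      exact hj (Subsingleton.elim _ _)
    refine ⟨e j, fun w hw => hj ?_⟩
    rw [← hw, Prod.smul_snd, DFinsupp.nsmul_apply, nsmul_eq_mul, ← hqp j hej,
      ZMod.natCast_self, zero_mul]
  · obtain ⟨k, hk⟩ := Finsupp.exists_forall_pow_nsmul_ne hp.one_lt hfree
    exact ⟨k, fun w hw => hk w.1 (by rw [← hw, Prod.smul_fst])⟩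

theorem CommGroup.exists_forall_pow_prime_pow_ne {p : ℕ} (hp : p.Prime) {A : Type*}
    [CommGroup A] [Group.FG A]
    (htor : ∀ q : ℕ, q.Prime → q ≠ p → ∀ a : A, a ^ q = 1 → a = 1) {a : A} (ha : a ≠ 1) :
    ∃ k₀ : ℕ, ∀ k ≥ k₀, ∀ b : A, b ^ p ^ k ≠ a := by
  obtain ⟨k₀, hk₀⟩ := AddCommGroup.exists_forall_prime_pow_nsmul_ne hp
    (A := Additive A) (fun q hq hqp a => htor q hq hqp a.toMul) (a := .ofMul a) ha
  refine ⟨k₀, fun k hk b hb => hk₀ (.ofMul (b ^ p ^ (k - k₀))) ?_⟩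
  rw [← ofMul_pow, ← pow_mul, ← pow_add, Nat.sub_add_cancel hk, hb]

theorem MonoidHom.exists_forall_ne_mul_pow_prime_pow {p : ℕ} (hp : p.Prime) {W G : Type*}
    [CommGroup W] [Group.FG W] [Group G] (Ψ : W →* G) {Z : Subgroup G}
    (htor : ∀ q : ℕ, q.Prime → q ≠ p → ∀ t ∈ Ψ.range, t ^ q ∈ Z → t ∈ Z)
    {g : G} (hg : g ∈ Ψ.range) (hgZ : g ∉ Z) :
    ∃ k₀ : ℕ, ∀ k ≥ k₀, ∀ z ∈ Z, ∀ u : W, g ≠ z * Ψ u ^ p ^ k := by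
  obtain ⟨w, rfl⟩ := hg
  have hmk : ∀ v : W, (v : W ⧸ Z.comap Ψ) = 1 ↔ Ψ v ∈ Z := fun v => QuotientGroup.eq_one_iff v
  have htorQ : ∀ q : ℕ, q.Prime → q ≠ p → ∀ a : W ⧸ Z.comap Ψ, a ^ q = 1 → a = 1 := by
    intro q hq hqp a ha
    obtain ⟨v, rfl⟩ := QuotientGroup.mk_surjective a
    rw [← QuotientGroup.mk_pow, hmk, map_pow] at ha
    exact (hmk v).mpr (htor q hq hqp _ ⟨v, rfl⟩ ha)
  obtain ⟨k₀, hk₀⟩ := CommGroup.exists_forall_pow_prime_pow_ne hp htorQ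
    (a := (w : W ⧸ Z.comap Ψ)) (mt (hmk w).mp hgZ)
  refine ⟨k₀, fun k hk z hz u hwz => hk₀ k hk u (Eq.symm ?_)⟩
  rw [← QuotientGroup.mk_pow, QuotientGroup.eq_iff_div_mem, Subgroup.mem_comap, map_div, map_pow,
    hwz, mul_div_cancel_right]
  exact hz

theorem Subgroup.relIndex_map_range_powMonoidHom_ne_zero {W G : Type*} [CommGroup W] [Group.FG W]
    [Group G] (f : W →* G) {n : ℕ} (hn : n ≠ 0) :
    ((powMonoidHom n : W →* W).range.map f).relIndex f.range ≠ 0 := by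
  have : Finite (W ⧸ (powMonoidHom n : W →* W).range) :=
    CommGroup.finite_of_fg_isMulTorsion _ fun a => by
      obtain ⟨w, rfl⟩ := QuotientGroup.mk_surjective a
      refine isOfFinOrder_iff_pow_eq_one.mpr ⟨n, Nat.pos_of_ne_zero hn, ?_⟩
      rw [← QuotientGroup.mk_pow, QuotientGroup.eq_one_iff]
      exact ⟨w, rfl⟩
  have := finiteIndex_of_finite_quotient (H := (powMonoidHom n : W →* W).range)
  have : ((powMonoidHom n : W →* W).range ⊔ f.ker).FiniteIndex := finiteIndex_of_le le_sup_left
  rw [f.range_eq_map, relIndex_map_map, top_sup_eq, relIndex_top_right]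
  exact FiniteIndex.index_ne_zero

theorem Subgroup.coe_map_range_powMonoidHom {W G : Type*} [CommGroup W] [Group G] (f : W →* G)
    (n : ℕ) : ((powMonoidHom n : W →* W).range.map f : Set G) = {x | ∃ g ∈ f.range, g ^ n = x} := by
  ext
  simp

theorem MonoidHom.range_piMap {ι : Type*} {W P : ι → Type*} [∀ i, Group (W i)] [∀ i, Group (P i)]
    (f : ∀ i, W i →* P i) :
    (MonoidHom.piMap f).range = Subgroup.pi Set.univ fun i => (f i).range :=
  SetLike.coe_injective (by rw [MonoidHom.coe_range, Subgroup.coe_pi]; exact Set.range_piMap _)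

namespace Subgroup

variable {G : Type*} [Group G] {p : ℕ}

def IsProPOpenNormal (p : ℕ) (N : Subgroup G) : Prop :=
  N.Normal ∧ ∃ k, N.index = p ^ k

theorem isProPOpenNormal_of_index_dvd (hp : p.Prime) {N : Subgroup G} [hN : N.Normal] {k : ℕ}
    (h : N.index ∣ p ^ k) : N.IsProPOpenNormal p :=
  ⟨hN, let ⟨j, _, hj⟩ := (Nat.dvd_prime_pow hp).mp h; ⟨j, hj⟩⟩

theorem isProPOpenNormal_top : (⊤ : Subgroup G).IsProPOpenNormal p :=
  ⟨inferInstance, 0, by rw [index_top, pow_zero]⟩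

namespace IsProPOpenNormal

theorem inf (hp : p.Prime) {N₁ N₂ : Subgroup G} (h₁ : N₁.IsProPOpenNormal p)
    (h₂ : N₂.IsProPOpenNormal p) : (N₁ ⊓ N₂).IsProPOpenNormal p := by
  obtain ⟨hN₁, k₁, hk₁⟩ := h₁
  obtain ⟨hN₂, k₂, hk₂⟩ := h₂
  refine isProPOpenNormal_of_index_dvd hp (k := k₂ + k₁) ?_
  rw [← relIndex_mul_index inf_le_left, inf_comm, inf_relIndex_right, pow_add, ← hk₁, ← hk₂]
  exact mul_dvd_mul_right (relIndex_dvd_index_of_normal _ _) _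

theorem iInf (hp : p.Prime) {ι : Type*} [Finite ι] {N : ι → Subgroup G}
    (h : ∀ i, (N i).IsProPOpenNormal p) : (⨅ i, N i).IsProPOpenNormal p := by
  cases nonempty_fintype ι
  rw [← Finset.inf_univ_eq_iInf]
  exact Finset.inf_induction isProPOpenNormal_top (fun _ h₁ _ h₂ => h₁.inf hp h₂)
    fun i _ => h i

theorem comap (hp : p.Prime) {G' : Type*} [Group G'] {N : Subgroup G}
    (h : N.IsProPOpenNormal p) (f : G' →* G) : (N.comap f).IsProPOpenNormal p := by
  obtain ⟨hN, k, hk⟩ := h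
  have := hN.comap f
  exact isProPOpenNormal_of_index_dvd hp (k := k)
    (index_comap N f ▸ hk ▸ relIndex_dvd_index_of_normal _ _)

theorem pi (hp : p.Prime) {ι : Type*} [Finite ι] {P : ι → Type*} [∀ i, Group (P i)]
    {N : ∀ i, Subgroup (P i)} (h : ∀ i, (N i).IsProPOpenNormal p) :
    (Subgroup.pi Set.univ N).IsProPOpenNormal p := by
  have hpi : Subgroup.pi Set.univ N = ⨅ i, (N i).comap (Pi.evalMonoidHom P i) := by
    ext x
    simp [mem_pi, mem_iInf]
  rw [hpi]
  exact iInf hp fun i => (h i).comap hp _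

end IsProPOpenNormal

end Subgroup

open Subgroup

section

variable {G : Type*} [Group G] {p : ℕ}

theorem QuotientResiduallyPFinite.exists_isProPOpenNormal (hp : p.Prime) {S : Set G}
    (h : QuotientResiduallyPFinite p G S) {x : G} (hx : x ∉ S) :
    ∃ N : Subgroup G, N.IsProPOpenNormal p ∧ S ⊆ N ∧ x ∉ N := by
  have := Fact.mk hp
  obtain ⟨K, _, _, hK, φ, hS, hφx⟩ := h x hx
  obtain ⟨k, hk⟩ := IsPGroup.iff_card.mp (hK.to_subgroup φ.range)
  exact ⟨φ.ker, ⟨φ.normal_ker, k, index_ker φ ▸ hk⟩, hS, hφx⟩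

theorem QuotientResiduallyPFinite.exists_isProPOpenNormal_of_finite (hp : p.Prime) {S : Set G}
    (h : QuotientResiduallyPFinite p G S) {F : Set G} (hF : F.Finite) (hFS : ∀ x ∈ F, x ∉ S) :
    ∃ N : Subgroup G, N.IsProPOpenNormal p ∧ S ⊆ N ∧ ∀ x ∈ F, x ∉ N := by
  have := hF.to_subtype
  choose N hN hSN hxN using fun x : F => h.exists_isProPOpenNormal hp (hFS x x.2)
  refine ⟨⨅ x : F, N x, IsProPOpenNormal.iInf hp hN, fun y hy => mem_iInf.mpr fun x => hSN x hy,
    fun x hx hxN' => hxN ⟨x, hx⟩ (mem_iInf.mp hxN' _)⟩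

theorem quotientResiduallyPFinite_of_forall_exists_isProPOpenNormal (hp : p.Prime) {S : Set G}
    (h : ∀ x ∉ S, ∃ N : Subgroup G, N.IsProPOpenNormal p ∧ S ⊆ N ∧ x ∉ N) :
    QuotientResiduallyPFinite p G S := by
  have := Fact.mk hp
  intro x hx
  obtain ⟨N, ⟨hN, k, hk⟩, hSN, hxN⟩ := h x hx
  have hfin : Finite (G ⧸ N) := Nat.finite_of_card_ne_zero (by
    rw [← index_eq_card, hk]; exact pow_ne_zero _ hp.ne_zero)
  obtain ⟨K, _, _, ⟨e⟩⟩ := Finite.exists_type_univ_nonempty_mulEquiv (G ⧸ N)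
  have hK : IsPGroup p (G ⧸ N) := IsPGroup.iff_card.mpr ⟨k, index_eq_card N ▸ hk⟩
  refine ⟨K, _, Finite.of_equiv _ e.toEquiv, hK.of_equiv e,
    e.toMonoidHom.comp (QuotientGroup.mk' N), fun y hy => ?_, ?_⟩
  · simpa [QuotientGroup.eq_one_iff] using hSN hy
  · simpa [QuotientGroup.eq_one_iff] using hxN

theorem ProPClosed.quotientResiduallyPFinite (hp : p.Prime) {Z : Subgroup G} [Z.Normal]
    (h : ProPClosed p G (Z : Set G)) : QuotientResiduallyPFinite p G (Z : Set G) := by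
  refine quotientResiduallyPFinite_of_forall_exists_isProPOpenNormal hp fun g hg => ?_
  obtain ⟨K, hK, ⟨k, hk⟩, hgK⟩ := h g hg
  refine ⟨Z ⊔ K, isProPOpenNormal_of_index_dvd hp (k := k)
    (hk ▸ index_dvd_of_le le_sup_right), fun z hz => mem_sup_left hz, fun hgZK => ?_⟩
  obtain ⟨z, hz, x, hx, rfl⟩ := (mul_normal Z K ▸ SetLike.mem_coe.mpr hgZK :)
  exact hgK x⁻¹ (inv_mem hx) (by rwa [mul_inv_cancel_right])

theorem exists_isProPOpenNormal_inf_le_of_relIndex_ne_zero (hp : p.Prime) {H M : Subgroup G}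
    (hMH : M ≤ H) (hfin : M.relIndex H ≠ 0) (hM : QuotientResiduallyPFinite p G (M : Set G))
    (g : G) : ∃ N : Subgroup G, N.IsProPOpenNormal p ∧ H ⊓ N ≤ M ∧
      (g ∉ H → ∀ x ∈ N, g * x ∉ H) := by
  have : (M.subgroupOf H).FiniteIndex := ⟨hfin⟩
  -- with `r` a transversal of `M` in `H`, it suffices to separate the finitely many elements
  -- `r q` and `(r q)⁻¹ * g` that lie outside `M`
  let r : H ⧸ M.subgroupOf H → G := fun q => (q.out : G)
  have hr : ∀ t ∈ H, ∃ q, ∃ m ∈ M, r q = t * m := fun t ht =>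
    let ⟨m, hm⟩ := QuotientGroup.mk_out_eq_mul (M.subgroupOf H) ⟨t, ht⟩
    ⟨_, m, m.2, congrArg Subtype.val hm⟩
  obtain ⟨N, hN, hMN, hFN⟩ := hM.exists_isProPOpenNormal_of_finite hp
    (((Set.finite_range r).union (Set.finite_range fun q => (r q)⁻¹ * g)).sdiff (t := M))
    fun x hx => hx.2
  refine ⟨N, hN, fun t ⟨ht, htN⟩ => ?_, fun hgH x hxN hgxH => ?_⟩
  · obtain ⟨q, m, hm, hrq⟩ := hr t ht
    by_contra htM
    refine hFN (r q) ⟨Or.inl ⟨q, rfl⟩, fun hrM => htM ?_⟩ ?_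
    · simpa [hrq] using mul_mem hrM (inv_mem hm)
    · rw [hrq]; exact mul_mem htN (hMN hm)
  · obtain ⟨q, m, hm, hrq⟩ := hr (g * x) hgxH
    refine hFN ((r q)⁻¹ * g) ⟨Or.inr ⟨q, rfl⟩, fun hM' => hgH ?_⟩ ?_
    · simpa [r] using mul_mem (q.out : H).2 (hMH hM')
    · rw [hrq]
      simpa [mul_assoc] using mul_mem (inv_mem (hMN hm)) (inv_mem hxN)

end

theorem proPClosed_of_le_pi_range {p : ℕ} (hp : p.Prime) {V : Type*} [Finite V]
    {W P : V → Type*} [∀ v, CommGroup (W v)] [∀ v, Group.FG (W v)] [∀ v, Group (P v)]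
    (ι : ∀ v, W v →* P v) {Z : Subgroup (∀ v, P v)}
    (hZ : Z ≤ Subgroup.pi Set.univ fun v => (ι v).range)
    (htor : ∀ q : ℕ, q.Prime → q ≠ p →
      ∀ t ∈ Subgroup.pi Set.univ (fun v => (ι v).range), t ^ q ∈ Z → t ∈ Z)
    (hRF : ∃ k₀ : ℕ, ∀ k ≥ k₀, ∀ v, QuotientResiduallyPFinite p (P v)
      ((powMonoidHom (p ^ k) : W v →* W v).range.map (ι v) : Set (P v))) :
    ProPClosed p (∀ v, P v) (Z : Set (∀ v, P v)) := by
  set Ψ := MonoidHom.piMap ι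
  have hΨ : Ψ.range = Subgroup.pi Set.univ fun v => (ι v).range := MonoidHom.range_piMap ι
  intro g hg
  obtain ⟨k₀, hk₀⟩ := hRF
  obtain ⟨k, hk, hgk⟩ : ∃ k ≥ k₀, g ∈ Ψ.range → ∀ z ∈ Z, ∀ u, g ≠ z * Ψ u ^ p ^ k := by
    by_cases hgT : g ∈ Ψ.range
    · obtain ⟨k₁, hk₁⟩ := Ψ.exists_forall_ne_mul_pow_prime_pow hp (hΨ ▸ htor) hgT hg
      exact ⟨max k₀ k₁, le_max_left _ _, fun _ => hk₁ _ (le_max_right _ _)⟩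
    · exact ⟨k₀, le_rfl, fun h => absurd h hgT⟩
  choose N hN hNM hNg using fun v => exists_isProPOpenNormal_inf_le_of_relIndex_ne_zero hp
    (map_le_range _ _) (relIndex_map_range_powMonoidHom_ne_zero (ι v) (pow_ne_zero k hp.ne_zero))
    (hk₀ k hk v) (g v)
  obtain ⟨hNnormal, hNindex⟩ := IsProPOpenNormal.pi hp hN
  refine ⟨Subgroup.pi Set.univ N, hNnormal, hNindex, fun x hx hgx => ?_⟩
  by_cases hgT : g ∈ Ψ.range
  · have hxT := mul_mem (inv_mem (hΨ ▸ hgT)) (hZ hgx)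
    rw [inv_mul_cancel_left] at hxT
    choose u hu using fun v => by
      simpa using hNM v ⟨hxT v trivial, hx v trivial⟩
    have hxu : Ψ u ^ p ^ k = x := funext hu
    exact hgk hgT (g * x) hgx u⁻¹ (by rw [map_inv, inv_pow, hxu, mul_inv_cancel_right])
  · obtain ⟨v, hv⟩ : ∃ v, g v ∉ (ι v).range := by
      by_contra! h
      exact hgT (hΨ ▸ fun v _ => h v)
    exact hNg v hv (x v) (hx v trivial) (hZ hgx v trivial)

theorem stmt16_general (p : ℕ) (hp : p.Prime) {V : Type*} [Finite V]
    (P : V → Type*) [∀ v, Group (P v)]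
    (T : ∀ v, Subgroup (P v))
    (hTfree : ∀ v, ∃ n : ℕ, Nonempty (T v ≃* Multiplicative (Fin n → ℤ)))
    (Z : Subgroup (∀ v, P v)) (hZ : Z ≤ Subgroup.pi Set.univ T)
    (htor : ∀ q : ℕ, q.Prime → q ≠ p →
      ∀ t ∈ Subgroup.pi Set.univ T, t ^ q ∈ Z → t ∈ Z)
    (hRF : ∃ k₀ : ℕ, ∀ k ≥ k₀, ∀ v,
      QuotientResiduallyPFinite p (P v) {x | ∃ g ∈ T v, g ^ (p ^ k) = x}) :
    ProPClosed p (∀ v, P v) (Z : Set (∀ v, P v)) ∧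
    (Z.Normal → QuotientResiduallyPFinite p (∀ v, P v) (Z : Set (∀ v, P v))) := by
  choose n e using hTfree
  let ι v : Multiplicative (Fin (n v) → ℤ) →* P v := (T v).subtype.comp (e v).some.symm.toMonoidHom
  have hιT : ∀ v, (ι v).range = T v := fun v => by
    rw [MonoidHom.range_comp, MonoidHom.range_eq_top.mpr (e v).some.symm.surjective,
      ← MonoidHom.range_eq_map, range_subtype]
  have hclosed : ProPClosed p (∀ v, P v) (Z : Set (∀ v, P v)) := by
    refine proPClosed_of_le_pi_range hp ι (funext hιT ▸ hZ) (funext hιT ▸ htor) ?_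
    simpa only [coe_map_range_powMonoidHom, hιT] using hRF
  exact ⟨hclosed, fun _ => hclosed.quotientResiduallyPFinite hp⟩

/-- Let `V` be a finite set and, for `v ∈ V`, let `P v` be a group with a normal subgroup
`T v` which is free abelian of finite rank; let `P = ∏ P v` and `T = ∏ T v ≤ P`.
Let `p` be a prime and `Z ≤ T` a subgroup such that `T/Z` has no `q`-torsion for any
prime `q ≠ p`. If `P v / n(T v)` is residually `p`-finite for every `v` and every
sufficiently large power `n` of `p`, then `Z` is closed in the pro-`p` topology on `P`;
in particular, if `Z` is normal in `P` then `P/Z` is residually `p`-finite. -/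
theorem stmt16 (p : ℕ) (hp : p.Prime) {V : Type*} [Finite V]
    (P : V → Type*) [∀ v, Group (P v)]
    (T : ∀ v, Subgroup (P v)) (hTnorm : ∀ v, (T v).Normal)
    (hTfree : ∀ v, ∃ n : ℕ, Nonempty (T v ≃* Multiplicative (Fin n → ℤ)))
    (Z : Subgroup (∀ v, P v)) (hZ : Z ≤ Subgroup.pi Set.univ T)
    (htor : ∀ q : ℕ, q.Prime → q ≠ p →
      ∀ t ∈ Subgroup.pi Set.univ T, t ^ q ∈ Z → t ∈ Z)
    (hRF : ∃ k₀ : ℕ, ∀ k ≥ k₀, ∀ v,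
      QuotientResiduallyPFinite p (P v) {x | ∃ g ∈ T v, g ^ (p ^ k) = x}) :
    ProPClosed p (∀ v, P v) (Z : Set (∀ v, P v)) ∧
    (Z.Normal → QuotientResiduallyPFinite p (∀ v, P v) (Z : Set (∀ v, P v))) :=
  stmt16_general p hp P T hTfree Z hZ htor hRF
end
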